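/- arXiv:0903.3726 — 10 statements merged into one kernel-verified Lean document; each statement's English description precedes it below -/
import Mathlib

section
/- Let 1 ≤ k ≤ i < l ≤ n. Then in the set whose minimum defines α_i one may replace the term (R_{i+1}−R_i)/2+e together with all terms corresponding to indices k ≤ j < l by the single term α'_{i−k+1}(k,l); that is, α_i = min({α'_{i−k+1}(k,l)} ∪ {R_{i+1}−R_j+d_j : 1 ≤ j < k} ∪ {R_{j+1}−R_i+d_j : l ≤ j ≤ n−1}). In particular, α_i ≤ α'_{i−k+1}(k,l). -/
/-!
Combinatorial setting abstracting a good BONG over a dyadic local field.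
`R : ℕ → ℤ` are the orders `R_i = ord a_i` (indices `1,…,n` used),
`d : ℕ → EReal` are the values `d_j = d(-a_j a_{j+1}) ∈ ℕ ∪ {∞}`
(the allowed values are encoded in condition (G3) below).
-/

/-- The term `(R_{i+1} - R_i)/2 + e` appearing in the definition of `α_i`. -/
noncomputable def halfTerm (e : ℤ) (R : ℕ → ℤ) (i : ℕ) : EReal :=
  (((R (i + 1) - R i : ℝ) / 2 + (e : ℝ) : ℝ) : EReal)

/-- The set whose minimum defines `α_i`. -/
noncomputable def alphaSet (e : ℤ) (n : ℕ) (R : ℕ → ℤ) (d : ℕ → EReal) (i : ℕ) :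
    Set EReal :=
  {halfTerm e R i}
    ∪ {x | ∃ j, 1 ≤ j ∧ j ≤ i ∧ x = ((R (i + 1) - R j : ℝ) : EReal) + d j}
    ∪ {x | ∃ j, i ≤ j ∧ j + 1 ≤ n ∧ x = ((R (j + 1) - R i : ℝ) : EReal) + d j}

/-- The invariant `α_i = α_i(L)`, for `1 ≤ i ≤ n - 1`. -/
noncomputable def alpha (e : ℤ) (n : ℕ) (R : ℕ → ℤ) (d : ℕ → EReal) (i : ℕ) : EReal :=
  sInf (alphaSet e n R d i)

/-- `α'_m(k,l)`: the `α`-invariant of the truncated data `R_k,…,R_l`, `d_k,…,d_{l-1}`. -/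
noncomputable def alphaT (e : ℤ) (R : ℕ → ℤ) (d : ℕ → EReal) (k l m : ℕ) : EReal :=
  alpha e (l - k + 1) (fun j => R (k + j - 1)) (fun j => d (k + j - 1)) m

/-- Conditions (G1)-(G4) on the data `(e, n, R, d)`, abstracting a good BONG. -/
structure GoodBONG (e : ℤ) (n : ℕ) (R : ℕ → ℤ) (d : ℕ → EReal) : Prop where
  he : 1 ≤ e
  hn : 2 ≤ n
  g1 : ∀ i, 1 ≤ i → i + 2 ≤ n → R i ≤ R (i + 2)
  g2a : ∀ j, 1 ≤ j → j + 1 ≤ n → 0 ≤ R (j + 1) - R j + 2 * e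
  g2b : ∀ j, 1 ≤ j → j + 1 ≤ n → 0 ≤ ((R (j + 1) - R j : ℝ) : EReal) + d j
  g3 : ∀ j, 1 ≤ j → j + 1 ≤ n →
    d j = 0 ∨ (∃ m : ℕ, Odd m ∧ (m : ℤ) ≤ 2 * e - 1 ∧ d j = ((m : ℝ) : EReal)) ∨
      d j = (((2 * e : ℤ) : ℝ) : EReal) ∨ d j = ⊤
  g4odd : ∀ j, 1 ≤ j → j + 1 ≤ n → Odd (R (j + 1) - R j) →
    0 < R (j + 1) - R j ∧ d j = 0
  g4even : ∀ j, 1 ≤ j → j + 1 ≤ n → Even (R (j + 1) - R j) → 0 < d j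

/-- for `1 ≤ k ≤ i < l ≤ n`, in the set defining `α_i` one may replace the
term `(R_{i+1}-R_i)/2+e` together with all terms with indices `k ≤ j < l` by the single
term `α'_{i-k+1}(k,l)`; in particular `α_i ≤ α'_{i-k+1}(k,l)`. -/
theorem stmt0 (e : ℤ) (n : ℕ) (R : ℕ → ℤ) (d : ℕ → EReal)
    (h : GoodBONG e n R d) (k i l : ℕ)
    (hk : 1 ≤ k) (hki : k ≤ i) (hil : i < l) (hln : l ≤ n) :
    alpha e n R d i =
      sInf ({alphaT e R d k l (i - k + 1)}
        ∪ {x | ∃ j, 1 ≤ j ∧ j < k ∧ x = ((R (i + 1) - R j : ℝ) : EReal) + d j}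
        ∪ {x | ∃ j, l ≤ j ∧ j + 1 ≤ n ∧ x = ((R (j + 1) - R i : ℝ) : EReal) + d j}) ∧
    alpha e n R d i ≤ alphaT e R d k l (i - k + 1) := by
  have key : alphaSet e n R d i =
      alphaSet e (l - k + 1) (fun j => R (k + j - 1)) (fun j => d (k + j - 1)) (i - k + 1)
        ∪ {x | ∃ j, 1 ≤ j ∧ j < k ∧ x = ((R (i + 1) - R j : ℝ) : EReal) + d j}
        ∪ {x | ∃ j, l ≤ j ∧ j + 1 ≤ n ∧ x = ((R (j + 1) - R i : ℝ) : EReal) + d j} := by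
    ext x
    simp only [alphaSet, halfTerm, Set.mem_union, Set.mem_singleton_iff, Set.mem_setOf_eq]
    constructor
    · rintro ((hx | ⟨j, hj1, hj2, rfl⟩) | ⟨j, hj1, hj2, rfl⟩)
      · left; left; left; left
        rw [show k + (i - k + 1 + 1) - 1 = i + 1 from by omega,
          show k + (i - k + 1) - 1 = i from by omega]
        exact hx
      · by_cases hjk : j < k
        · left; right; exact ⟨j, hj1, hjk, rfl⟩
        · left; left; left; right
          refine ⟨j - k + 1, by omega, by omega, ?_⟩
          rw [show k + (i - k + 1 + 1) - 1 = i + 1 from by omega,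
            show k + (j - k + 1) - 1 = j from by omega]
      · by_cases hjl : j + 1 ≤ l
        · left; left; right
          refine ⟨j - k + 1, by omega, by omega, ?_⟩
          rw [show k + (j - k + 1 + 1) - 1 = j + 1 from by omega,
            show k + (i - k + 1) - 1 = i from by omega,
            show k + (j - k + 1) - 1 = j from by omega]
        · right; exact ⟨j, by omega, hj2, rfl⟩
    · rintro ((((hx | ⟨j', hj1, hj2, rfl⟩) | ⟨j', hj1, hj2, rfl⟩) | ⟨j, hj1, hj2, rfl⟩)
        | ⟨j, hj1, hj2, rfl⟩)
      · left; left
        rw [hx, show k + (i - k + 1 + 1) - 1 = i + 1 from by omega,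
          show k + (i - k + 1) - 1 = i from by omega]
      · left; right
        refine ⟨k + j' - 1, by omega, by omega, ?_⟩
        rw [show k + (i - k + 1 + 1) - 1 = i + 1 from by omega]
      · right
        refine ⟨k + j' - 1, by omega, by omega, ?_⟩
        rw [show k + j' - 1 + 1 = k + (j' + 1) - 1 from by omega,
          show k + (i - k + 1) - 1 = i from by omega]
      · left; right; exact ⟨j, hj1, by omega, rfl⟩
      · right; exact ⟨j, by omega, hj2, rfl⟩
  have halphaT : alphaT e R d k l (i - k + 1) =
      sInf (alphaSet e (l - k + 1) (fun j => R (k + j - 1)) (fun j => d (k + j - 1))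
        (i - k + 1)) := rfl
  constructor
  · rw [alpha, key, halphaT]
    simp only [sInf_union, sInf_singleton]
  · rw [alpha, key, sInf_union, sInf_union, halphaT]
    exact le_trans inf_le_left inf_le_left
end

section
/- The sequence i ↦ R_i + α_i (for 1 ≤ i ≤ n−1) is nondecreasing, and the sequence i ↦ −R_{i+1} + α_i (for 1 ≤ i ≤ n−1) is nonincreasing. -/
/-
Every element of the set defining `α_{i+1}`, shifted by `R_{i+1} - R_i`, dominates an element of
the set defining `α_i`, and every element of the set defining `α_i`, shifted by `R_{i+2} - R_{i+1}`,
dominates an element of the set defining `α_{i+1}`: the `d`-terms match up index by index, and the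
only inequality needed is `R_i ≤ R_{i+2}` (G1). A finite shift commutes with the infimum, so
`R_i + α_i ≤ R_{i+1} + α_{i+1}` and `-R_{i+2} + α_{i+1} ≤ -R_{i+1} + α_i`, and these chain.
-/

lemma EReal.sInf_le_coe_add_sInf {S T : Set EReal} (c : ℝ) (h : ∀ x ∈ T, ∃ y ∈ S, y ≤ c + x) :
    sInf S ≤ c + sInf T := by
  rw [add_comm, ← EReal.sub_le_iff_le_add (.inl (EReal.coe_ne_bot c)) (.inl (EReal.coe_ne_top c))]
  refine le_sInf fun x hx => EReal.sub_le_of_le_add ?_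
  obtain ⟨y, hyS, hyx⟩ := h x hx
  rw [add_comm]
  exact (sInf_le hyS).trans hyx

lemma EReal.coe_add_le_coe_add_coe_add {a b c : ℝ} (x : EReal) (h : a ≤ b + c) :
    (a : EReal) + x ≤ b + (c + x) := by
  rw [← add_assoc, ← EReal.coe_add]
  exact add_le_add_left (EReal.coe_le_coe_iff.mpr h) x

lemma EReal.coe_add_coe_add (a b : ℝ) (x : EReal) : (a : EReal) + (b + x) = ↑(a + b) + x := by
  rw [← add_assoc, ← EReal.coe_add]

section Alpha

variable {e : ℤ} {n : ℕ} {R : ℕ → ℤ} {d : ℕ → EReal} {i : ℕ}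

lemma halfTerm_mem_alphaSet : halfTerm e R i ∈ alphaSet e n R d i :=
  .inl (.inl rfl)

lemma lower_mem_alphaSet {j : ℕ} (hj : 1 ≤ j) (hji : j ≤ i) :
    ((R (i + 1) - R j : ℝ) : EReal) + d j ∈ alphaSet e n R d i :=
  .inl (.inr ⟨j, hj, hji, rfl⟩)

lemma upper_mem_alphaSet {j : ℕ} (hij : i ≤ j) (hjn : j + 1 ≤ n) :
    ((R (j + 1) - R i : ℝ) : EReal) + d j ∈ alphaSet e n R d i :=
  .inr ⟨j, hij, hjn, rfl⟩

lemma halfTerm_le_coe_add_halfTerm (hR : R i ≤ R (i + 2)) :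
    halfTerm e R i ≤ ((R (i + 1) - R i : ℝ) : EReal) + halfTerm e R (i + 1) ∧
      halfTerm e R (i + 1) ≤ ((R (i + 2) - R (i + 1) : ℝ) : EReal) + halfTerm e R i := by
  have hR' : (R i : ℝ) ≤ R (i + 2) := by exact_mod_cast hR
  simp only [halfTerm, ← EReal.coe_add, EReal.coe_le_coe_iff]
  constructor <;> linarith

lemma alpha_le_coe_add_alpha_succ (hR : R i ≤ R (i + 2)) (hin : i + 2 ≤ n) :
    alpha e n R d i ≤ ((R (i + 1) - R i : ℝ) : EReal) + alpha e n R d (i + 1) := by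
  have hR' : (R i : ℝ) ≤ R (i + 2) := by exact_mod_cast hR
  refine EReal.sInf_le_coe_add_sInf _ ?_
  rintro x ((rfl | ⟨j, hj, hji, rfl⟩) | ⟨j, hij, hjn, rfl⟩)
  · exact ⟨_, halfTerm_mem_alphaSet, (halfTerm_le_coe_add_halfTerm hR).1⟩
  · rcases Nat.lt_or_ge i j with hij | hji'
    · obtain rfl : j = i + 1 := by omega
      exact ⟨_, upper_mem_alphaSet (Nat.le_succ _) hin,
        EReal.coe_add_le_coe_add_coe_add _ (by linarith)⟩
    · exact ⟨_, lower_mem_alphaSet hj hji', EReal.coe_add_le_coe_add_coe_add _ (by linarith)⟩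
  · exact ⟨_, upper_mem_alphaSet (by omega) hjn,
      EReal.coe_add_le_coe_add_coe_add _ (by linarith)⟩

lemma alpha_succ_le_coe_add_alpha (hR : R i ≤ R (i + 2)) (hi : 1 ≤ i) :
    alpha e n R d (i + 1) ≤ ((R (i + 2) - R (i + 1) : ℝ) : EReal) + alpha e n R d i := by
  have hR' : (R i : ℝ) ≤ R (i + 2) := by exact_mod_cast hR
  refine EReal.sInf_le_coe_add_sInf _ ?_
  rintro x ((rfl | ⟨j, hj, hji, rfl⟩) | ⟨j, hij, hjn, rfl⟩)
  · exact ⟨_, halfTerm_mem_alphaSet, (halfTerm_le_coe_add_halfTerm hR).2⟩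
  · exact ⟨_, lower_mem_alphaSet hj (by omega), EReal.coe_add_le_coe_add_coe_add _ (by linarith)⟩
  · rcases Nat.lt_or_ge i j with hij' | hji
    · exact ⟨_, upper_mem_alphaSet hij' hjn, EReal.coe_add_le_coe_add_coe_add _ (by linarith)⟩
    · obtain rfl : j = i := by omega
      exact ⟨_, lower_mem_alphaSet hi (Nat.le_succ _),
        EReal.coe_add_le_coe_add_coe_add _ (by linarith)⟩

lemma coe_add_alpha_le_coe_add_alpha_succ (hR : R i ≤ R (i + 2)) (hin : i + 2 ≤ n) :
    ((R i : ℝ) : EReal) + alpha e n R d i ≤ ((R (i + 1) : ℝ) : EReal) + alpha e n R d (i + 1) :=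
  calc ((R i : ℝ) : EReal) + alpha e n R d i
      ≤ (R i : ℝ) + (((R (i + 1) - R i : ℝ) : EReal) + alpha e n R d (i + 1)) := by
        gcongr; exact alpha_le_coe_add_alpha_succ hR hin
    _ = ((R (i + 1) : ℝ) : EReal) + alpha e n R d (i + 1) := by
        rw [EReal.coe_add_coe_add, add_sub_cancel]

lemma neg_coe_add_alpha_succ_le_neg_coe_add_alpha (hR : R i ≤ R (i + 2)) (hi : 1 ≤ i) :
    (((-R (i + 2) : ℤ) : ℝ) : EReal) + alpha e n R d (i + 1) ≤
      (((-R (i + 1) : ℤ) : ℝ) : EReal) + alpha e n R d i :=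
  calc (((-R (i + 2) : ℤ) : ℝ) : EReal) + alpha e n R d (i + 1)
      ≤ ((-R (i + 2) : ℤ) : ℝ) + (((R (i + 2) - R (i + 1) : ℝ) : EReal) + alpha e n R d i) := by
        gcongr; exact alpha_succ_le_coe_add_alpha hR hi
    _ = (((-R (i + 1) : ℤ) : ℝ) : EReal) + alpha e n R d i := by
        rw [EReal.coe_add_coe_add]; congr 2; push_cast; ring

end Alpha

/-- `i ↦ R_i + α_i` is nondecreasing and `i ↦ -R_{i+1} + α_i` is
nonincreasing, for `1 ≤ i ≤ n-1`. -/
theorem stmt1 (e : ℤ) (n : ℕ) (R : ℕ → ℤ) (d : ℕ → EReal)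
    (h : GoodBONG e n R d) :
    ∀ i j, 1 ≤ i → i ≤ j → j + 1 ≤ n →
      ((R i : ℝ) : EReal) + alpha e n R d i ≤ ((R j : ℝ) : EReal) + alpha e n R d j ∧
      (((-R (j + 1) : ℤ) : ℝ) : EReal) + alpha e n R d j ≤
        (((-R (i + 1) : ℤ) : ℝ) : EReal) + alpha e n R d i := by
  intro i j hi hij hjn
  have hstep : ∀ a ∈ Set.Icc 1 (n - 1), a + 1 ∈ Set.Icc 1 (n - 1) → R a ≤ R (a + 2) ∧ a + 2 ≤ n :=
    fun a ha ha1 => by have := ha1.2; exact ⟨h.g1 a ha.1 (by omega), by omega⟩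
  have hmono : MonotoneOn (fun k => ((R k : ℝ) : EReal) + alpha e n R d k) (Set.Icc 1 (n - 1)) :=
    monotoneOn_of_le_add_one Set.ordConnected_Icc fun a _ ha ha1 =>
      coe_add_alpha_le_coe_add_alpha_succ (hstep a ha ha1).1 (hstep a ha ha1).2
  have hanti : AntitoneOn (fun k => (((-R (k + 1) : ℤ) : ℝ) : EReal) + alpha e n R d k)
      (Set.Icc 1 (n - 1)) :=
    antitoneOn_of_add_one_le Set.ordConnected_Icc fun a _ ha ha1 =>
      neg_coe_add_alpha_succ_le_neg_coe_add_alpha (hstep a ha ha1).1 ha.1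
  have hi' : i ∈ Set.Icc 1 (n - 1) := ⟨hi, by omega⟩
  have hj' : j ∈ Set.Icc 1 (n - 1) := ⟨hi.trans hij, by omega⟩
  exact ⟨hmono hi' hj' hij, hanti hi' hj' hij⟩
end

section
/- Suppose 1 ≤ i ≤ j ≤ n−1 and R_i + R_{i+1} = R_j + R_{j+1}. Then R_i + α_i = R_{i+1} + α_{i+1} = ⋯ = R_j + α_j and −R_{i+1} + α_i = −R_{i+2} + α_{i+1} = ⋯ = −R_{j+1} + α_j. -/
/-!
By (G1) the adjacent sums `R_k + R_{k+1}` increase weakly with `k`, so equal sums at `i` and `j`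
force `R_{k+2} = R_k` for `i ≤ k < j`. For such `k`, substituting `R_{k+2} = R_k` shows that the
set whose minimum is `α_k` is the translate by `R_{k+1} - R_k` of the set defining `α_{k+1}`, the
terms with index `k` and `k + 1` migrating between its two index ranges. Hence
`α_k = α_{k+1} + R_{k+1} - R_k`, which is one step of each chain of equalities.
-/

namespace EReal

noncomputable def addCoeOrderIso (c : ℝ) : EReal ≃o EReal where
  toFun x := x + c
  invFun x := x - c
  left_inv _ := add_sub_cancel_right
  right_inv _ := sub_add_cancel
  map_rel_iff' := (addLECancellable_coe c).add_le_add_iff_right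

theorem sInf_image_add_coe (c : ℝ) (S : Set EReal) :
    sInf ((· + (c : EReal)) '' S) = sInf S + c :=
  (map_sInf (addCoeOrderIso c) S).symm

theorem coe_add_add_coe (a b : ℝ) (x : EReal) :
    (a : EReal) + x + b = ((a + b : ℝ) : EReal) + x := by
  rw [add_right_comm, ← coe_add]

end EReal

theorem Nat.rel_of_forall_rel_succ_of_le_of_le_of_le {β : Type*} (r : β → β → Prop)
    [Std.Refl r] [IsTrans β r] {f : ℕ → β} {i j : ℕ}
    (h : ∀ n, i ≤ n → n < j → r (f n) (f (n + 1))) {a b : ℕ}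
    (hia : i ≤ a) (hab : a ≤ b) (hbj : b ≤ j) : r (f a) (f b) := by
  induction b, hab using Nat.le_induction with
  | base => exact refl _
  | succ b hab ih => exact _root_.trans (ih (by omega)) (h b (by omega) (by omega))

theorem eq_of_adjacent_sum_eq {R : ℕ → ℤ} {i j : ℕ}
    (hR2 : ∀ k, i ≤ k → k < j → R k ≤ R (k + 2)) (hR : R i + R (i + 1) = R j + R (j + 1))
    {k : ℕ} (hik : i ≤ k) (hkj : k < j) : R (k + 2) = R k := by
  have hsum {a b : ℕ} (hia : i ≤ a) (hab : a ≤ b) (hbj : b ≤ j) :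
      R a + R (a + 1) ≤ R b + R (b + 1) :=
    Nat.rel_of_forall_rel_succ_of_le_of_le_of_le (f := fun n => R n + R (n + 1)) (· ≤ ·)
      (fun m him hmj => show R m + R (m + 1) ≤ R (m + 1) + R (m + 2) by
        have := hR2 m him hmj; omega) hia hab hbj
  have hlow := hsum le_rfl hik hkj.le
  have hstep := hR2 k hik hkj
  have hhigh : R (k + 1) + R (k + 2) ≤ R j + R (j + 1) := hsum (by omega) hkj le_rfl
  omega

section Shift

variable (e : ℤ) (n : ℕ) (R : ℕ → ℤ) (d : ℕ → EReal) {k : ℕ}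
  (hk : 1 ≤ k) (hkn : k + 2 ≤ n) (hRk : R (k + 2) = R k)
include hk hkn hRk

theorem alphaSet_eq_image_add_succ :
    alphaSet e n R d k = (· + ((R (k + 1) - R k : ℝ) : EReal)) '' alphaSet e n R d (k + 1) := by
  have hRk' : (R (k + 1 + 1) : ℝ) = R k := by exact_mod_cast hRk
  ext x
  simp only [alphaSet, halfTerm, Set.mem_union, Set.mem_singleton_iff, Set.mem_ofPred_eq,
    Set.mem_image]
  constructor
  · rintro ((rfl | ⟨m, hm1, hmk, rfl⟩) | ⟨m, hkm, hmn, rfl⟩)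
    · refine ⟨_, Or.inl (Or.inl rfl), ?_⟩
      rw [← EReal.coe_add, EReal.coe_eq_coe_iff, hRk']
      ring
    · refine ⟨_, Or.inl (Or.inr ⟨m, hm1, by omega, rfl⟩), ?_⟩
      rw [EReal.coe_add_add_coe, hRk', sub_add_sub_cancel']
    · obtain rfl | hkm := hkm.eq_or_lt
      · refine ⟨_, Or.inl (Or.inr ⟨k, hk, by omega, rfl⟩), ?_⟩
        rw [EReal.coe_add_add_coe, hRk', sub_add_sub_cancel']
      · refine ⟨_, Or.inr ⟨m, hkm, hmn, rfl⟩, ?_⟩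
        rw [EReal.coe_add_add_coe, sub_add_sub_cancel]
  · rintro ⟨y, ((rfl | ⟨m, hm1, hmk, rfl⟩) | ⟨m, hkm, hmn, rfl⟩), rfl⟩
    · left; left
      rw [← EReal.coe_add, EReal.coe_eq_coe_iff, hRk']
      ring
    · rw [EReal.coe_add_add_coe, hRk', sub_add_sub_cancel']
      obtain rfl | hmk := hmk.eq_or_lt
      · exact Or.inr ⟨k + 1, by omega, hkn, by rw [hRk', sub_self, sub_self]⟩
      · exact Or.inl (Or.inr ⟨m, hm1, by omega, rfl⟩)
    · rw [EReal.coe_add_add_coe, sub_add_sub_cancel]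
      exact Or.inr ⟨m, by omega, hmn, rfl⟩

theorem alpha_eq_alpha_succ_add :
    alpha e n R d k = alpha e n R d (k + 1) + ((R (k + 1) - R k : ℝ) : EReal) := by
  rw [alpha, alphaSet_eq_image_add_succ e n R d hk hkn hRk, EReal.sInf_image_add_coe, alpha]

theorem coe_add_alpha_succ :
    ((R (k + 1) : ℝ) : EReal) + alpha e n R d (k + 1) = ((R k : ℝ) : EReal) + alpha e n R d k := by
  rw [alpha_eq_alpha_succ_add e n R d hk hkn hRk, ← add_assoc, EReal.coe_add_add_coe,
    add_sub_cancel]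

theorem neg_coe_add_alpha_succ :
    (((-R (k + 2) : ℤ) : ℝ) : EReal) + alpha e n R d (k + 1) =
      (((-R (k + 1) : ℤ) : ℝ) : EReal) + alpha e n R d k := by
  rw [alpha_eq_alpha_succ_add e n R d hk hkn hRk, ← add_assoc, EReal.coe_add_add_coe, hRk]
  congr 2
  push_cast
  ring

end Shift

theorem stmt2_general (e : ℤ) (n : ℕ) (R : ℕ → ℤ) (d : ℕ → EReal)
    (h : GoodBONG e n R d) (i j : ℕ)
    (hi : 1 ≤ i) (hjn : j + 1 ≤ n)
    (hR : R i + R (i + 1) = R j + R (j + 1)) :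
    ∀ k, i ≤ k → k ≤ j →
      ((R k : ℝ) : EReal) + alpha e n R d k = ((R i : ℝ) : EReal) + alpha e n R d i ∧
      (((-R (k + 1) : ℤ) : ℝ) : EReal) + alpha e n R d k =
        (((-R (i + 1) : ℤ) : ℝ) : EReal) + alpha e n R d i := by
  have hper (l : ℕ) (hil : i ≤ l) (hlj : l < j) : R (l + 2) = R l :=
    eq_of_adjacent_sum_eq (fun m him hmj => h.g1 m (by omega) (by omega)) hR hil hlj
  intro k hik hkj
  constructor
  · refine (Nat.rel_of_forall_rel_succ_of_le_of_le_of_le (@Eq EReal)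
      (f := fun l => ((R l : ℝ) : EReal) + alpha e n R d l) (fun l hil hlj => ?_) le_rfl hik hkj).symm
    exact (coe_add_alpha_succ e n R d (by omega) (by omega) (hper l hil hlj)).symm
  · refine (Nat.rel_of_forall_rel_succ_of_le_of_le_of_le (@Eq EReal)
      (f := fun l => (((-R (l + 1) : ℤ) : ℝ) : EReal) + alpha e n R d l) (fun l hil hlj => ?_)
      le_rfl hik hkj).symm
    exact (neg_coe_add_alpha_succ e n R d (by omega) (by omega) (hper l hil hlj)).symm

/-- if `1 ≤ i ≤ j ≤ n-1` and `R_i + R_{i+1} = R_j + R_{j+1}`, then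
`R_i + α_i = ⋯ = R_j + α_j` and `-R_{i+1} + α_i = ⋯ = -R_{j+1} + α_j`. -/
theorem stmt2 (e : ℤ) (n : ℕ) (R : ℕ → ℤ) (d : ℕ → EReal)
    (h : GoodBONG e n R d) (i j : ℕ)
    (hi : 1 ≤ i) (hij : i ≤ j) (hjn : j + 1 ≤ n)
    (hR : R i + R (i + 1) = R j + R (j + 1)) :
    ∀ k, i ≤ k → k ≤ j →
      ((R k : ℝ) : EReal) + alpha e n R d k = ((R i : ℝ) : EReal) + alpha e n R d i ∧
      (((-R (k + 1) : ℤ) : ℝ) : EReal) + alpha e n R d k =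
        (((-R (i + 1) : ℤ) : ℝ) : EReal) + alpha e n R d i :=
  stmt2_general e n R d h i j hi hjn hR
end

section
/- Suppose 1 ≤ i ≤ j ≤ n−1 and R_i + R_{i+1} = R_j + R_{j+1}. Then R_k = R_l for all k, l ∈ [i, j+1] with k ≡ l (mod 2), and α_k = α_l for all k, l ∈ [i, j] with k ≡ l (mod 2). -/
lemma castEq3 (R : ℕ → ℤ) (a b a' b' : ℕ) (h : R a - R b = R a' - R b') :
    ((R a - R b : ℝ) : EReal) = ((R a' - R b' : ℝ) : EReal) := by
  norm_cast

lemma alphaSet_shift (e : ℤ) (n : ℕ) (R : ℕ → ℤ) (d : ℕ → EReal) (k : ℕ)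
    (hk1 : 1 ≤ k) (hk3 : k + 3 ≤ n)
    (h1 : R (k + 2) = R k) (h2 : R (k + 3) = R (k + 1)) :
    alphaSet e n R d (k + 2) = alphaSet e n R d k := by
  have e1 : k + 2 + 1 = k + 3 := rfl
  ext x
  simp only [alphaSet, halfTerm, Set.mem_union, Set.mem_singleton_iff, Set.mem_setOf_eq,
    e1, h1, h2]
  constructor
  · rintro ((hx | ⟨m, hm1, hm2, hx⟩) | ⟨m, hm1, hm2, hx⟩)
    · exact Or.inl (Or.inl hx)
    · rcases Nat.lt_or_ge m (k + 1) with hm | hm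
      · exact Or.inl (Or.inr ⟨m, hm1, by omega, hx⟩)
      · rcases (by omega : m = k + 1 ∨ m = k + 2) with rfl | rfl
        · refine Or.inr ⟨k + 1, by omega, by omega, ?_⟩
          rw [hx, castEq3 R (k+1) (k+1) (k+1+1) k
            (by rw [show k+1+1 = k+2 from rfl, h1]; ring)]
        · refine Or.inr ⟨k + 2, by omega, by omega, ?_⟩
          rw [hx, castEq3 R (k+1) (k+2) (k+2+1) k
            (by rw [e1, h1, h2])]
    · exact Or.inr ⟨m, by omega, hm2, hx⟩
  · rintro ((hx | ⟨m, hm1, hm2, hx⟩) | ⟨m, hm1, hm2, hx⟩)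
    · exact Or.inl (Or.inl hx)
    · exact Or.inl (Or.inr ⟨m, hm1, by omega, hx⟩)
    · rcases Nat.lt_or_ge m (k + 2) with hm | hm
      · rcases (by omega : m = k ∨ m = k + 1) with hm' | rfl
        · rw [hm'] at hx
          exact Or.inl (Or.inr ⟨k, hk1, by omega, hx⟩)
        · refine Or.inl (Or.inr ⟨k + 1, by omega, by omega, ?_⟩)
          rw [hx, castEq3 R (k+1+1) k (k+1) (k+1)
            (by rw [show k+1+1 = k+2 from rfl, h1]; ring)]
      · exact Or.inr ⟨m, hm, hm2, hx⟩

/-- if `1 ≤ i ≤ j ≤ n-1` and `R_i + R_{i+1} = R_j + R_{j+1}`, then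
`R_k = R_l` for all `k, l ∈ [i, j+1]` of the same parity, and `α_k = α_l` for all
`k, l ∈ [i, j]` of the same parity. -/
theorem stmt3 (e : ℤ) (n : ℕ) (R : ℕ → ℤ) (d : ℕ → EReal)
    (h : GoodBONG e n R d) (i j : ℕ)
    (hi : 1 ≤ i) (hij : i ≤ j) (hjn : j + 1 ≤ n)
    (hR : R i + R (i + 1) = R j + R (j + 1)) :
    (∀ k l, i ≤ k → k ≤ j + 1 → i ≤ l → l ≤ j + 1 → k % 2 = l % 2 → R k = R l) ∧
    (∀ k l, i ≤ k → k ≤ j → i ≤ l → l ≤ j → k % 2 = l % 2 →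
      alpha e n R d k = alpha e n R d l) := by
  have g1 := h.g1
  -- monotonicity of the sums R_l + R_{l+1}
  have mono : ∀ k l, i ≤ k → k ≤ l → l ≤ j → R k + R (k + 1) ≤ R l + R (l + 1) := by
    intro k l hik hkl
    induction l, hkl using Nat.le_induction with
    | base => intro _; exact le_rfl
    | succ l hkl ih =>
      intro hl1
      have hg := g1 l (by omega) (by omega)
      have h1 : R l + R (l + 1) ≤ R (l + 1) + R (l + 1 + 1) := by
        rw [show l + 1 + 1 = l + 2 from rfl]; linarith
      exact le_trans (ih (by omega)) h1
  have hsum : ∀ l, i ≤ l → l ≤ j → R l + R (l + 1) = R i + R (i + 1) := by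
    intro l hil hlj
    have a := mono i l le_rfl hil hlj
    have b := mono l j hil hlj le_rfl
    linarith
  have hstep : ∀ k, i ≤ k → k + 2 ≤ j + 1 → R (k + 2) = R k := by
    intro k hik hk2
    have a := hsum k hik (by omega)
    have b := hsum (k + 1) (by omega) (by omega)
    rw [show k + 1 + 1 = k + 2 from rfl] at b
    linarith
  have hR2 : ∀ m k, i ≤ k → k + 2 * m ≤ j + 1 → R (k + 2 * m) = R k := by
    intro m
    induction m with
    | zero => intro k _ _; norm_num
    | succ m ih =>
      intro k hik hk
      have e1 : k + 2 * (m + 1) = k + 2 * m + 2 := by ring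
      rw [e1, hstep (k + 2 * m) (by omega) (by omega), ih k hik (by omega)]
  have part1 : ∀ k l, i ≤ k → k ≤ j + 1 → i ≤ l → l ≤ j + 1 → k % 2 = l % 2 →
      R k = R l := by
    have key : ∀ k l, i ≤ k → k ≤ l → l ≤ j + 1 → k % 2 = l % 2 → R k = R l := by
      intro k l hk hkl hl hp
      have hl2 : l = k + 2 * ((l - k) / 2) := by omega
      rw [hl2]
      exact (hR2 ((l - k) / 2) k hk (by omega)).symm
    intro k l hk hk2 hl hl2 hp
    rcases le_total k l with h' | h'
    · exact key k l hk h' hl2 hp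
    · exact (key l k hl h' hk2 hp.symm).symm
  refine ⟨part1, ?_⟩
  have astep : ∀ k, i ≤ k → k + 2 ≤ j → alpha e n R d (k + 2) = alpha e n R d k := by
    intro k hk hk2
    unfold alpha
    rw [alphaSet_shift e n R d k (by omega) (by omega)
      (part1 (k + 2) k (by omega) (by omega) hk (by omega) (by omega))
      (part1 (k + 3) (k + 1) (by omega) (by omega) (by omega) (by omega) (by omega))]
  have ha2 : ∀ m k, i ≤ k → k + 2 * m ≤ j →
      alpha e n R d (k + 2 * m) = alpha e n R d k := by
    intro m
    induction m with
    | zero => intro k _ _; norm_num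
    | succ m ih =>
      intro k hik hk
      have e1 : k + 2 * (m + 1) = k + 2 * m + 2 := by ring
      rw [e1, astep (k + 2 * m) (by omega) (by omega), ih k hik (by omega)]
  have key : ∀ k l, i ≤ k → k ≤ l → l ≤ j → k % 2 = l % 2 →
      alpha e n R d k = alpha e n R d l := by
    intro k l hk hkl hl hp
    have hl2 : l = k + 2 * ((l - k) / 2) := by omega
    rw [hl2]
    exact (ha2 ((l - k) / 2) k hk (by omega)).symm
  intro k l hk hk2 hl hl2 hp
  rcases le_total k l with h' | h'
  · exact key k l hk h' hl2 hp
  · exact (key l k hl h' hk2 hp.symm).symm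
end

section
/- Let 1 ≤ i ≤ n−1 and 1 ≤ k ≤ h < l ≤ n with i ≤ h. Then in the set whose minimum defines α_i, all terms R_{j+1}−R_i+d_j corresponding to indices h ≤ j < l may be replaced by the single term R_h − R_i + α'_{h−k+1}(k,l) without changing the minimum. In particular (taking k = 1, l = n), all terms with h ≤ j ≤ n−1 may be replaced by R_h − R_i + α_h. -/
/-!
Shifting the defining set of `α'_{h-k+1}(k,l)` by `R_h - R_i` turns its terms
`R_{j+1} - R_h + d_j` (`h ≤ j < l`) into exactly the removed terms, so the new term is at most
each of them. Every other shifted term dominates a term of the set defining `α_i`, because (G1)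
makes `R_j + R_{j+1}` nondecreasing in `j`. So the new term lies between `α_i` and the minimum of
the removed terms, and the minimum does not change.
-/

theorem sInf_union_singleton_union_eq {α : Type*} [CompleteLattice α] {A C D : Set α} {t : α}
    (hle : sInf (A ∪ (C ∪ D)) ≤ t) (hge : t ≤ sInf C) :
    sInf (A ∪ {t} ∪ D) = sInf (A ∪ (C ∪ D)) := by
  simp only [sInf_union, sInf_singleton] at hle ⊢
  apply le_antisymm
  · exact le_inf (inf_le_left.trans inf_le_left)
      (le_inf ((inf_le_left.trans inf_le_right).trans hge) inf_le_right)
  · exact le_inf (le_inf inf_le_left hle) (inf_le_right.trans inf_le_right)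

theorem EReal.le_coe_add_sInf {a : EReal} {c : ℝ} {S : Set EReal} (h : ∀ y ∈ S, a ≤ c + y) :
    a ≤ c + sInf S := by
  rw [add_comm, ← EReal.sub_le_iff_le_add (.inl (EReal.coe_ne_bot c)) (.inl (EReal.coe_ne_top c))]
  refine le_sInf fun y hy => ?_
  rw [EReal.sub_le_iff_le_add (.inl (EReal.coe_ne_bot c)) (.inl (EReal.coe_ne_top c)), add_comm]
  exact h y hy

theorem setOf_exists_eq_union_of_le {α : Type*} (f : ℕ → α) {i h l n : ℕ} (hih : i ≤ h)
    (hln : l ≤ n) :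
    {x | ∃ j, i ≤ j ∧ j + 1 ≤ n ∧ x = f j} =
      {x | ∃ j, h ≤ j ∧ j < l ∧ x = f j} ∪
        {x | ∃ j, i ≤ j ∧ j + 1 ≤ n ∧ (j < h ∨ l ≤ j) ∧ x = f j} := by
  ext x
  constructor
  · rintro ⟨j, hij, hjn, rfl⟩
    by_cases hj : h ≤ j ∧ j < l
    · exact Or.inl ⟨j, hj.1, hj.2, rfl⟩
    · exact Or.inr ⟨j, hij, hjn, by omega, rfl⟩
  · rintro (⟨j, hhj, hjl, rfl⟩ | ⟨j, hij, hjn, -, rfl⟩)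
    · exact ⟨j, by omega, by omega, rfl⟩
    · exact ⟨j, hij, hjn, rfl⟩

theorem add_succ_le_add_succ {n : ℕ} {R : ℕ → ℤ} (hR : ∀ i, 1 ≤ i → i + 2 ≤ n → R i ≤ R (i + 2))
    {i h : ℕ} (hi : 1 ≤ i) (hih : i ≤ h) (hhn : h + 1 ≤ n) :
    R i + R (i + 1) ≤ R h + R (h + 1) := by
  induction h, hih using Nat.le_induction with
  | base => rfl
  | succ h hih ih =>
    have := hR h (by omega) hhn
    linarith [ih (by omega)]

theorem alphaT_eq_sInf (e : ℤ) (R : ℕ → ℤ) (d : ℕ → EReal) {k h l : ℕ} (hkh : k ≤ h)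
    (hhl : h < l) :
    alphaT e R d k l (h - k + 1) =
      sInf ({halfTerm e R h}
        ∪ {x | ∃ j, k ≤ j ∧ j ≤ h ∧ x = ((R (h + 1) - R j : ℝ) : EReal) + d j}
        ∪ {x | ∃ j, h ≤ j ∧ j < l ∧ x = ((R (j + 1) - R h : ℝ) : EReal) + d j}) := by
  have hh1 : k + (h - k + 1 + 1) - 1 = h + 1 := by omega
  have hh : k + (h - k + 1) - 1 = h := by omega
  simp only [alphaT, alpha, alphaSet, halfTerm, hh1, hh]
  congr 3
  · ext x
    constructor
    · rintro ⟨j, hj1, hjh, rfl⟩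
      exact ⟨k + j - 1, by omega, by omega, rfl⟩
    · rintro ⟨j, hkj, hjh, rfl⟩
      refine ⟨j - k + 1, by omega, by omega, ?_⟩
      rw [show k + (j - k + 1) - 1 = j by omega]
  · ext x
    constructor
    · rintro ⟨j, hhj, hjl, rfl⟩
      refine ⟨k + j - 1, by omega, by omega, ?_⟩
      rw [show k + (j + 1) - 1 = k + j - 1 + 1 by omega]
    · rintro ⟨j, hhj, hjl, rfl⟩
      refine ⟨j - k + 1, by omega, by omega, ?_⟩
      rw [show k + (j - k + 1 + 1) - 1 = j + 1 by omega, show k + (j - k + 1) - 1 = j by omega]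

theorem alphaT_one (e : ℤ) (R : ℕ → ℤ) (d : ℕ → EReal) {n : ℕ} (hn : 1 ≤ n) (m : ℕ) :
    alphaT e R d 1 n m = alpha e n R d m := by
  simp only [alphaT, Nat.add_sub_cancel_left, Nat.sub_add_cancel hn]

section

variable {e : ℤ} {n : ℕ} {R : ℕ → ℤ} {d : ℕ → EReal} {i k h l : ℕ}

theorem alpha_le_coe_add_alphaT (hR : ∀ i, 1 ≤ i → i + 2 ≤ n → R i ≤ R (i + 2))
    (hi : 1 ≤ i) (hk : 1 ≤ k) (hkh : k ≤ h) (hhl : h < l) (hln : l ≤ n) (hih : i ≤ h) :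
    alpha e n R d i ≤ ((R h - R i : ℝ) : EReal) + alphaT e R d k l (h - k + 1) := by
  have hmono : ∀ j, 1 ≤ j → j ≤ h → (R j + R (j + 1) : ℝ) ≤ R h + R (h + 1) := fun j hj hjh => by
    exact_mod_cast add_succ_le_add_succ hR hj hjh (by omega)
  rw [alphaT_eq_sInf e R d hkh hhl]
  refine EReal.le_coe_add_sInf ?_
  rintro y ((rfl | ⟨j, hkj, hjh, rfl⟩) | ⟨j, hhj, hjl, rfl⟩) <;>
    simp only [halfTerm, ← add_assoc, ← EReal.coe_add]
  · refine sInf_le_of_le (Or.inl (Or.inl rfl)) (EReal.coe_le_coe_iff.2 ?_)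
    linarith [hmono i hi hih]
  · obtain hji | hij := le_or_gt j i
    · refine sInf_le_of_le (Or.inl (Or.inr ⟨j, by omega, hji, rfl⟩)) ?_
      gcongr
      linarith [hmono i hi hih]
    · refine sInf_le_of_le (Or.inr ⟨j, hij.le, by omega, rfl⟩) ?_
      gcongr
      linarith [hmono j (by omega) hjh]
  · refine sInf_le_of_le (Or.inr ⟨j, by omega, by omega, rfl⟩) (le_of_eq ?_)
    congr 2
    ring

theorem coe_add_alphaT_le {j : ℕ} (hkh : k ≤ h) (hhj : h ≤ j) (hjl : j < l) :
    ((R h - R i : ℝ) : EReal) + alphaT e R d k l (h - k + 1) ≤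
      ((R (j + 1) - R i : ℝ) : EReal) + d j := by
  rw [alphaT_eq_sInf e R d hkh (by omega)]
  calc _ ≤ ((R h - R i : ℝ) : EReal) + (((R (j + 1) - R h : ℝ) : EReal) + d j) := by
        gcongr; exact sInf_le (Or.inr ⟨j, hhj, hjl, rfl⟩)
    _ = ((R (j + 1) - R i : ℝ) : EReal) + d j := by
        rw [← add_assoc, ← EReal.coe_add]
        congr 2
        ring

theorem alpha_eq_sInf_replace (hR : ∀ i, 1 ≤ i → i + 2 ≤ n → R i ≤ R (i + 2))
    (hi : 1 ≤ i) (hk : 1 ≤ k) (hkh : k ≤ h) (hhl : h < l) (hln : l ≤ n) (hih : i ≤ h) :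
    alpha e n R d i =
      sInf ({halfTerm e R i}
        ∪ {x | ∃ j, 1 ≤ j ∧ j ≤ i ∧ x = ((R (i + 1) - R j : ℝ) : EReal) + d j}
        ∪ {((R h - R i : ℝ) : EReal) + alphaT e R d k l (h - k + 1)}
        ∪ {x | ∃ j, i ≤ j ∧ j + 1 ≤ n ∧ (j < h ∨ l ≤ j) ∧
            x = ((R (j + 1) - R i : ℝ) : EReal) + d j}) := by
  have hle := alpha_le_coe_add_alphaT (e := e) (d := d) hR hi hk hkh hhl hln hih
  rw [alpha, alphaSet,
    setOf_exists_eq_union_of_le (fun j => ((R (j + 1) - R i : ℝ) : EReal) + d j) hih hln] at hle ⊢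
  refine (sInf_union_singleton_union_eq hle (le_sInf ?_)).symm
  rintro - ⟨j, hhj, hjl, rfl⟩
  exact coe_add_alphaT_le hkh hhj hjl

end

theorem stmt6_general (e : ℤ) (n : ℕ) (R : ℕ → ℤ) (d : ℕ → EReal)
    (H : GoodBONG e n R d) (i k h l : ℕ)
    (hi : 1 ≤ i) (hk : 1 ≤ k) (hkh : k ≤ h) (hhl : h < l)
    (hln : l ≤ n) (hih : i ≤ h) :
    alpha e n R d i =
      sInf ({halfTerm e R i}
        ∪ {x | ∃ j, 1 ≤ j ∧ j ≤ i ∧ x = ((R (i + 1) - R j : ℝ) : EReal) + d j}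
        ∪ {((R h - R i : ℝ) : EReal) + alphaT e R d k l (h - k + 1)}
        ∪ {x | ∃ j, i ≤ j ∧ j + 1 ≤ n ∧ (j < h ∨ l ≤ j) ∧
            x = ((R (j + 1) - R i : ℝ) : EReal) + d j}) ∧
    alpha e n R d i =
      sInf ({halfTerm e R i}
        ∪ {x | ∃ j, 1 ≤ j ∧ j ≤ i ∧ x = ((R (i + 1) - R j : ℝ) : EReal) + d j}
        ∪ {((R h - R i : ℝ) : EReal) + alpha e n R d h}
        ∪ {x | ∃ j, i ≤ j ∧ j < h ∧ x = ((R (j + 1) - R i : ℝ) : EReal) + d j}) := by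
  refine ⟨alpha_eq_sInf_replace H.g1 hi hk hkh hhl hln hih, ?_⟩
  rw [alpha_eq_sInf_replace H.g1 hi le_rfl (by omega) (by omega) le_rfl hih,
    alphaT_one e R d (by omega), Nat.sub_add_cancel (by omega : 1 ≤ h)]
  congr 2
  ext x
  constructor
  · rintro ⟨j, hij, hjn, hj, rfl⟩
    exact ⟨j, hij, by omega, rfl⟩
  · rintro ⟨j, hij, hjh, rfl⟩
    exact ⟨j, hij, by omega, Or.inl hjh, rfl⟩

/-- for `1 ≤ i ≤ n-1` and `1 ≤ k ≤ h < l ≤ n` with `i ≤ h`, in the set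
defining `α_i` all terms `R_{j+1} - R_i + d_j` with `h ≤ j < l` may be replaced by the
single term `R_h - R_i + α'_{h-k+1}(k,l)`. In particular (for `k = 1`, `l = n`) all
terms with `h ≤ j ≤ n-1` may be replaced by `R_h - R_i + α_h`. -/
theorem stmt6 (e : ℤ) (n : ℕ) (R : ℕ → ℤ) (d : ℕ → EReal)
    (H : GoodBONG e n R d) (i k h l : ℕ)
    (hi : 1 ≤ i) (hin : i + 1 ≤ n) (hk : 1 ≤ k) (hkh : k ≤ h) (hhl : h < l)
    (hln : l ≤ n) (hih : i ≤ h) :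
    alpha e n R d i =
      sInf ({halfTerm e R i}
        ∪ {x | ∃ j, 1 ≤ j ∧ j ≤ i ∧ x = ((R (i + 1) - R j : ℝ) : EReal) + d j}
        ∪ {((R h - R i : ℝ) : EReal) + alphaT e R d k l (h - k + 1)}
        ∪ {x | ∃ j, i ≤ j ∧ j + 1 ≤ n ∧ (j < h ∨ l ≤ j) ∧
            x = ((R (j + 1) - R i : ℝ) : EReal) + d j}) ∧
    alpha e n R d i =
      sInf ({halfTerm e R i}
        ∪ {x | ∃ j, 1 ≤ j ∧ j ≤ i ∧ x = ((R (i + 1) - R j : ℝ) : EReal) + d j}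
        ∪ {((R h - R i : ℝ) : EReal) + alpha e n R d h}
        ∪ {x | ∃ j, i ≤ j ∧ j < h ∧ x = ((R (j + 1) - R i : ℝ) : EReal) + d j}) :=
  stmt6_general e n R d H i k h l hi hk hkh hhl hln hih
end

section
/- Define the dual data R*_i := −R_{n+1−i} for 1 ≤ i ≤ n and d*_j := d_{n−j} for 1 ≤ j ≤ n−1 (corresponding to the dual lattice L^# with good BONG ⟨a_n^{−1},…,a_1^{−1}⟩). Then (R*, d*) again satisfies conditions (G1)–(G4), and the associated invariants satisfy α*_i = α_{n−i} for all 1 ≤ i ≤ n−1. -/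
/-- the dual data `R*_i = -R_{n+1-i}`, `d*_j = d_{n-j}` again satisfies
(G1)-(G4), and its invariants satisfy `α*_i = α_{n-i}` for `1 ≤ i ≤ n-1`. -/
theorem stmt9 (e : ℤ) (n : ℕ) (R : ℕ → ℤ) (d : ℕ → EReal)
    (h : GoodBONG e n R d) :
    GoodBONG e n (fun i => -R (n + 1 - i)) (fun j => d (n - j)) ∧
    ∀ i, 1 ≤ i → i + 1 ≤ n →
      alpha e n (fun i => -R (n + 1 - i)) (fun j => d (n - j)) i =
        alpha e n R d (n - i) := by
  obtain ⟨he, hn, g1, g2a, g2b, g3, g4odd, g4even⟩ := h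
  constructor
  · refine ⟨he, hn, ?_, ?_, ?_, ?_, ?_, ?_⟩
    · intro i hi hin
      have e1 : n + 1 - (i + 2) = n - 1 - i := by omega
      have e2 : n + 1 - i = (n - 1 - i) + 2 := by omega
      simp only [e1, e2]
      have := g1 (n - 1 - i) (by omega) (by omega)
      omega
    · intro j hj hjn
      have e1 : n + 1 - (j + 1) = n - j := by omega
      have e2 : n + 1 - j = (n - j) + 1 := by omega
      simp only [e1, e2]
      have := g2a (n - j) (by omega) (by omega)
      omega
    · intro j hj hjn
      have e1 : n + 1 - (j + 1) = n - j := by omega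
      have e2 : n + 1 - j = (n - j) + 1 := by omega
      simp only [e1, e2]
      have h' := g2b (n - j) (by omega) (by omega)
      have key : ((((-R (n - j) : ℤ) : ℝ) - ((-R (n - j + 1) : ℤ) : ℝ) : ℝ) : EReal)
          = ((((R (n - j + 1) : ℤ) : ℝ) - ((R (n - j) : ℤ) : ℝ) : ℝ) : EReal) := by
        congr 1; push_cast; ring
      rw [key]
      exact h'
    · intro j hj hjn
      exact g3 (n - j) (by omega) (by omega)
    · intro j hj hjn
      have e1 : n + 1 - (j + 1) = n - j := by omega
      have e2 : n + 1 - j = (n - j) + 1 := by omega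
      simp only [e1, e2]
      intro hodd
      have hodd' : Odd (R ((n - j) + 1) - R (n - j)) := by
        rwa [show R ((n - j) + 1) - R (n - j) = -R (n - j) - - R ((n - j) + 1) from by ring]
      have := g4odd (n - j) (by omega) (by omega) hodd'
      exact ⟨by omega, this.2⟩
    · intro j hj hjn
      have e1 : n + 1 - (j + 1) = n - j := by omega
      have e2 : n + 1 - j = (n - j) + 1 := by omega
      simp only [e1, e2]
      intro heven
      have heven' : Even (R ((n - j) + 1) - R (n - j)) := by
        rwa [show R ((n - j) + 1) - R (n - j) = -R (n - j) - - R ((n - j) + 1) from by ring]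
      exact g4even (n - j) (by omega) (by omega) heven'
  · intro i hi hin
    have hset : alphaSet e n (fun i => -R (n + 1 - i)) (fun j => d (n - j)) i
        = alphaSet e n R d (n - i) := by
      ext x
      simp only [alphaSet, halfTerm, Set.mem_union, Set.mem_singleton_iff, Set.mem_setOf_eq]
      constructor
      · rintro ((h0 | ⟨j, hj1, hj2, hx⟩) | ⟨j, hj1, hj2, hx⟩)
        · left; left
          rw [h0]
          have e1 : n + 1 - (i + 1) = n - i := by omega
          have e2 : n + 1 - i = (n - i) + 1 := by omega
          simp only [e1, e2]
          congr 1
          first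
          | (push_cast; ring1)
          | (norm_cast; ring1)
          | (norm_cast; omega)
          | (push_cast; norm_cast; ring1)
        · right
          refine ⟨n - j, by omega, by omega, ?_⟩
          have e1 : n + 1 - (i + 1) = n - i := by omega
          have e2 : n + 1 - j = (n - j) + 1 := by omega
          rw [hx]
          simp only [e1, e2]
          congr 1
          first
          | (push_cast; ring1)
          | (norm_cast; ring1)
          | (norm_cast; omega)
          | (push_cast; norm_cast; ring1)
        · left; right
          refine ⟨n - j, by omega, by omega, ?_⟩
          have e1 : n + 1 - (j + 1) = n - j := by omega
          have e2 : n + 1 - i = (n - i) + 1 := by omega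
          rw [hx]
          simp only [e1, e2]
          congr 1
          first
          | (push_cast; ring1)
          | (norm_cast; ring1)
          | (norm_cast; omega)
          | (push_cast; norm_cast; ring1)
      · rintro ((h0 | ⟨j, hj1, hj2, hx⟩) | ⟨j, hj1, hj2, hx⟩)
        · left; left
          rw [h0]
          have e1 : n + 1 - (i + 1) = n - i := by omega
          have e2 : n + 1 - i = (n - i) + 1 := by omega
          simp only [e1, e2]
          congr 1
          first
          | (push_cast; ring1)
          | (norm_cast; ring1)
          | (norm_cast; omega)
          | (push_cast; norm_cast; ring1)
        · right
          refine ⟨n - j, by omega, by omega, ?_⟩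
          have e1 : n + 1 - (n - j + 1) = j := by omega
          have e2 : n + 1 - i = (n - i) + 1 := by omega
          have e3 : n - (n - j) = j := by omega
          rw [hx]
          simp only [e1, e2, e3]
          congr 1
          first
          | (push_cast; ring1)
          | (norm_cast; ring1)
          | (norm_cast; omega)
          | (push_cast; norm_cast; ring1)
        · left; right
          refine ⟨n - j, by omega, by omega, ?_⟩
          have e1 : n + 1 - (i + 1) = n - i := by omega
          have e2 : n + 1 - (n - j) = j + 1 := by omega
          have e3 : n - (n - j) = j := by omega
          rw [hx]
          simp only [e1, e2, e3]
          congr 1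
          first
          | (push_cast; ring1)
          | (norm_cast; ring1)
          | (norm_cast; omega)
          | (push_cast; norm_cast; ring1)
    unfold alpha
    rw [hset]
end

section
/- For every 1 ≤ i ≤ n−1 one has α_i ≥ 0, and α_i = 0 if and only if R_{i+1} − R_i = −2e. -/
section Stmt10Aux

variable {e : ℤ} {n : ℕ} {R : ℕ → ℤ} {d : ℕ → EReal}

lemma chain' (h : GoodBONG e n R d) :
    ∀ k a, 1 ≤ a → a + 2 * k ≤ n → R a ≤ R (a + 2 * k) := by
  intro k
  induction k with
  | zero => intro a _ _; simp
  | succ k ih =>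
    intro a ha hle
    have h1 : R a ≤ R (a + 2) := h.g1 a ha (by omega)
    have h2 : R (a + 2) ≤ R (a + 2 + 2 * k) := ih (a + 2) (by omega) (by omega)
    have h3 : a + 2 + 2 * k = a + 2 * (k + 1) := by omega
    rw [h3] at h2
    exact h1.trans h2

lemma d_cases' (h : GoodBONG e n R d) (j : ℕ) (h1 : 1 ≤ j) (h2 : j + 1 ≤ n) :
    d j = ⊤ ∨ ∃ c : ℤ, 0 ≤ c ∧ d j = ((c : ℝ) : EReal) ∧ (c = 0 ∨ Odd c ∨ c = 2 * e) := by
  rcases h.g3 j h1 h2 with h0 | ⟨m, hm, _, hdm⟩ | h2e | htop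
  · exact Or.inr ⟨0, le_refl 0, by simpa using h0, Or.inl rfl⟩
  · refine Or.inr ⟨(m : ℤ), Int.natCast_nonneg m, by exact_mod_cast hdm, Or.inr (Or.inl ?_)⟩
    obtain ⟨k, hk⟩ := hm
    exact ⟨k, by exact_mod_cast hk⟩
  · exact Or.inr ⟨2 * e, by linarith [h.he], h2e, Or.inr (Or.inr rfl)⟩
  · exact Or.inl htop

lemma d_nonneg' (h : GoodBONG e n R d) (j : ℕ) (h1 : 1 ≤ j) (h2 : j + 1 ≤ n) :
    0 ≤ d j := by
  rcases d_cases' h j h1 h2 with htop | ⟨c, hc, hd, _⟩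
  · rw [htop]; exact le_top
  · rw [hd]
    exact EReal.coe_nonneg.mpr (by exact_mod_cast hc)

/-- If `R_{j+1} - R_j + c = 0` where `d j = c ≥ 0`, then `R_{j+1} - R_j = -2e`. -/
lemma step_zero' (h : GoodBONG e n R d) (j : ℕ) (h1 : 1 ≤ j) (h2 : j + 1 ≤ n)
    (c : ℤ) (hd : d j = ((c : ℝ) : EReal))
    (hsum : R (j + 1) - R j + c = 0) : R (j + 1) - R j = -(2 * e) := by
  rcases d_cases' h j h1 h2 with htop | ⟨c', _, hd', hcase⟩
  · rw [htop] at hd; exact absurd hd.symm (EReal.coe_ne_top _)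
  · have hcc : c = c' := by
      rw [hd] at hd'
      have hr : (c : ℝ) = (c' : ℝ) := by exact_mod_cast hd'
      exact_mod_cast hr
    subst hcc
    rcases hcase with hc0 | hcodd | hc2e
    · -- c = 0 : then diff = 0 is even, contradicting g4even since d j = 0
      exfalso
      subst hc0
      have heven : Even (R (j + 1) - R j) := ⟨0, by omega⟩
      have hpos := h.g4even j h1 h2 heven
      rw [hd] at hpos
      simp at hpos
    · -- c odd : then diff = -c is odd, g4odd forces diff > 0, but diff = -c ≤ 0 and odd c ≠ 0
      exfalso
      obtain ⟨k, hk⟩ := hcodd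
      have hodd : Odd (R (j + 1) - R j) := ⟨-k - 1, by omega⟩
      have hpos := (h.g4odd j h1 h2 hodd).1
      omega
    · omega

/-- A zero element of the second family forces `R_{i+1} - R_i = -2e`. -/
lemma famB_zero' (h : GoodBONG e n R d) (i j : ℕ) (hi1 : 1 ≤ i) (hin : i + 1 ≤ n)
    (hj1 : 1 ≤ j) (hji : j ≤ i)
    (hzero : ((R (i + 1) - R j : ℝ) : EReal) + d j = 0) :
    R (i + 1) - R i = -(2 * e) := by
  have hjn : j + 1 ≤ n := by omega
  rcases d_cases' h j hj1 hjn with htop | ⟨c, hc, hd, _⟩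
  · rw [htop, EReal.coe_add_top] at hzero
    exact absurd hzero (by simp)
  · rw [hd, ← EReal.coe_add] at hzero
    have hz : ((R (i + 1) : ℝ) - (R j : ℝ)) + (c : ℝ) = 0 := by
      exact_mod_cast EReal.coe_eq_zero.mp hzero
    have hzi : R (i + 1) - R j + c = 0 := by exact_mod_cast hz
    rcases Nat.even_or_odd' (i - j) with ⟨k, hk | hk⟩
    · -- i = j + 2k
      have hij : i = j + 2 * k := by omega
      have hch : R (j + 1) ≤ R (i + 1) := by
        have := chain' h k (j + 1) (by omega) (by omega)
        have heq : j + 1 + 2 * k = i + 1 := by omega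
        rwa [heq] at this
      have hg2b := h.g2b j hj1 hjn
      rw [hd, ← EReal.coe_add] at hg2b
      have hg2b' : (0 : ℝ) ≤ ((R (j + 1) : ℝ) - (R j : ℝ)) + (c : ℝ) := by
        exact_mod_cast EReal.coe_nonneg.mp hg2b
      have hg2bi : 0 ≤ R (j + 1) - R j + c := by exact_mod_cast hg2b'
      have hstep : R (j + 1) - R j + c = 0 := by omega
      have hdiff := step_zero' h j hj1 hjn c hd hstep
      have hch2 : R j ≤ R i := by
        have := chain' h k j hj1 (by omega)
        have heq : j + 2 * k = i := by omega
        rwa [heq] at this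
      have hg2a := h.g2a i hi1 hin
      omega
    · -- i = j + 2k + 1 : impossible
      exfalso
      have hij : i = j + 2 * k + 1 := by omega
      have hch : R j ≤ R (i + 1) := by
        have := chain' h (k + 1) j hj1 (by omega)
        have heq : j + 2 * (k + 1) = i + 1 := by omega
        rwa [heq] at this
      have hc0 : c = 0 := by omega
      have hd0 : d j = 0 := by rw [hd, hc0]; simp
      have hodd : Odd (R (j + 1) - R j) := by
        by_contra hev
        have heven : Even (R (j + 1) - R j) := Int.not_odd_iff_even.mp hev
        have := h.g4even j hj1 hjn heven
        rw [hd0] at this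
        exact lt_irrefl 0 this
      have hpos := (h.g4odd j hj1 hjn hodd).1
      have hA : R j ≤ R (j + 2) := h.g1 j hj1 (by omega)
      have hB : R (j + 2) ≤ R (i + 1) := by
        have := chain' h k (j + 2) (by omega) (by omega)
        have heq : j + 2 + 2 * k = i + 1 := by omega
        rwa [heq] at this
      have heqR : R (j + 2) = R j := by omega
      have hodd2 : Odd (R (j + 1 + 1) - R (j + 1)) := by
        have hidx : j + 1 + 1 = j + 2 := by omega
        rw [hidx, heqR]
        obtain ⟨m, hm⟩ := hodd
        exact ⟨-m - 1, by omega⟩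
      have hpos2 := (h.g4odd (j + 1) (by omega) (by omega) hodd2).1
      have hidx : j + 1 + 1 = j + 2 := by omega
      rw [hidx] at hpos2
      omega

/-- A zero element of the third family forces `R_{i+1} - R_i = -2e`. -/
lemma famC_zero' (h : GoodBONG e n R d) (i j : ℕ) (hi1 : 1 ≤ i)
    (hij : i ≤ j) (hjn : j + 1 ≤ n)
    (hzero : ((R (j + 1) - R i : ℝ) : EReal) + d j = 0) :
    R (i + 1) - R i = -(2 * e) := by
  have hj1 : 1 ≤ j := le_trans hi1 hij
  rcases d_cases' h j hj1 hjn with htop | ⟨c, hc, hd, _⟩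
  · rw [htop, EReal.coe_add_top] at hzero
    exact absurd hzero (by simp)
  · rw [hd, ← EReal.coe_add] at hzero
    have hz : ((R (j + 1) : ℝ) - (R i : ℝ)) + (c : ℝ) = 0 := by
      exact_mod_cast EReal.coe_eq_zero.mp hzero
    have hzi : R (j + 1) - R i + c = 0 := by exact_mod_cast hz
    rcases Nat.even_or_odd' (j - i) with ⟨k, hk | hk⟩
    · -- j = i + 2k
      have hji' : j = i + 2 * k := by omega
      have hch : R i ≤ R j := by
        have := chain' h k i hi1 (by omega)
        have heq : i + 2 * k = j := by omega
        rwa [heq] at this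
      have hg2b := h.g2b j hj1 hjn
      rw [hd, ← EReal.coe_add] at hg2b
      have hg2b' : (0 : ℝ) ≤ ((R (j + 1) : ℝ) - (R j : ℝ)) + (c : ℝ) := by
        exact_mod_cast EReal.coe_nonneg.mp hg2b
      have hg2bi : 0 ≤ R (j + 1) - R j + c := by exact_mod_cast hg2b'
      have hstep : R (j + 1) - R j + c = 0 := by omega
      have hdiff := step_zero' h j hj1 hjn c hd hstep
      have hch2 : R (i + 1) ≤ R (j + 1) := by
        have := chain' h k (i + 1) (by omega) (by omega)
        have heq : i + 1 + 2 * k = j + 1 := by omega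
        rwa [heq] at this
      have hg2a := h.g2a i hi1 (by omega)
      omega
    · -- j = i + 2k + 1 : impossible
      exfalso
      have hji' : j = i + 2 * k + 1 := by omega
      have hch : R i ≤ R (j + 1) := by
        have := chain' h (k + 1) i hi1 (by omega)
        have heq : i + 2 * (k + 1) = j + 1 := by omega
        rwa [heq] at this
      have hc0 : c = 0 := by omega
      have hd0 : d j = 0 := by rw [hd, hc0]; simp
      have hodd : Odd (R (j + 1) - R j) := by
        by_contra hev
        have heven : Even (R (j + 1) - R j) := Int.not_odd_iff_even.mp hev
        have := h.g4even j hj1 hjn heven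
        rw [hd0] at this
        exact lt_irrefl 0 this
      have hpos := (h.g4odd j hj1 hjn hodd).1
      -- R (j-1) = R i = R (j+1), with j - 1 = i + 2k
      have hA : R i ≤ R (i + 2 * k) := chain' h k i hi1 (by omega)
      have hB : R (i + 2 * k) ≤ R (i + 2 * k + 2) := h.g1 (i + 2 * k) (by omega) (by omega)
      have heq1 : i + 2 * k + 2 = j + 1 := by omega
      rw [heq1] at hB
      have hodd2 : Odd (R (i + 2 * k + 1) - R (i + 2 * k)) := by
        have heq2 : i + 2 * k + 1 = j := by omega
        have heq3 : R (i + 2 * k) = R (j + 1) := by omega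
        rw [heq2, heq3]
        obtain ⟨m, hm⟩ := hodd
        exact ⟨-m - 1, by omega⟩
      have hpos2 := (h.g4odd (i + 2 * k) (by omega) (by omega) hodd2).1
      have heq2 : i + 2 * k + 1 = j := by omega
      rw [heq2] at hpos2
      have heq3 : R (i + 2 * k) = R (j + 1) := by omega
      omega
lemma famB_nonneg' (h : GoodBONG e n R d) (i j : ℕ) (hi1 : 1 ≤ i) (hin : i + 1 ≤ n)
    (hj1 : 1 ≤ j) (hji : j ≤ i) :
    0 ≤ ((R (i + 1) - R j : ℝ) : EReal) + d j := by
  have hjn : j + 1 ≤ n := by omega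
  rcases Nat.even_or_odd' (i - j) with ⟨k, hk | hk⟩
  · -- i = j + 2k
    have hch : R (j + 1) ≤ R (i + 1) := by
      have := chain' h k (j + 1) (by omega) (by omega)
      have heq : j + 1 + 2 * k = i + 1 := by omega
      rwa [heq] at this
    have hsplit : ((R (i + 1) - R j : ℝ) : EReal)
        = ((R (i + 1) - R (j + 1) : ℝ) : EReal) + ((R (j + 1) - R j : ℝ) : EReal) := by
      rw [← EReal.coe_add]; norm_num
    rw [hsplit, add_assoc]
    refine add_nonneg ?_ (h.g2b j hj1 hjn)
    exact EReal.coe_nonneg.mpr (by exact_mod_cast sub_nonneg.mpr hch)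
  · -- i = j + 2k + 1
    have hch : R j ≤ R (i + 1) := by
      have := chain' h (k + 1) j hj1 (by omega)
      have heq : j + 2 * (k + 1) = i + 1 := by omega
      rwa [heq] at this
    refine add_nonneg ?_ (d_nonneg' h j hj1 hjn)
    exact EReal.coe_nonneg.mpr (by exact_mod_cast sub_nonneg.mpr hch)

lemma famC_nonneg' (h : GoodBONG e n R d) (i j : ℕ) (hi1 : 1 ≤ i)
    (hij : i ≤ j) (hjn : j + 1 ≤ n) :
    0 ≤ ((R (j + 1) - R i : ℝ) : EReal) + d j := by
  have hj1 : 1 ≤ j := le_trans hi1 hij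
  rcases Nat.even_or_odd' (j - i) with ⟨k, hk | hk⟩
  · -- j = i + 2k
    have hch : R i ≤ R j := by
      have := chain' h k i hi1 (by omega)
      have heq : i + 2 * k = j := by omega
      rwa [heq] at this
    have hsplit : ((R (j + 1) - R i : ℝ) : EReal)
        = ((R j - R i : ℝ) : EReal) + ((R (j + 1) - R j : ℝ) : EReal) := by
      rw [← EReal.coe_add]; norm_num
    rw [hsplit, add_assoc]
    refine add_nonneg ?_ (h.g2b j hj1 hjn)
    exact EReal.coe_nonneg.mpr (by exact_mod_cast sub_nonneg.mpr hch)
  · -- j = i + 2k + 1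
    have hch : R i ≤ R (j + 1) := by
      have := chain' h (k + 1) i hi1 (by omega)
      have heq : i + 2 * (k + 1) = j + 1 := by omega
      rwa [heq] at this
    refine add_nonneg ?_ (d_nonneg' h j hj1 hjn)
    exact EReal.coe_nonneg.mpr (by exact_mod_cast sub_nonneg.mpr hch)


end Stmt10Aux

/-- `α_i ≥ 0`, with `α_i = 0` iff `R_{i+1} - R_i = -2e`. -/
theorem stmt10 (e : ℤ) (n : ℕ) (R : ℕ → ℤ) (d : ℕ → EReal)
    (h : GoodBONG e n R d) :
    ∀ i, 1 ≤ i → i + 1 ≤ n →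
      0 ≤ alpha e n R d i ∧ (alpha e n R d i = 0 ↔ R (i + 1) - R i = -(2 * e)) := by
  intro i hi1 hin
  have hnonneg : ∀ x ∈ alphaSet e n R d i, 0 ≤ x := by
    intro x hx
    rcases hx with (hx | hx) | hx
    · rw [Set.mem_singleton_iff] at hx
      subst hx
      unfold halfTerm
      rw [EReal.coe_nonneg]
      have hg := h.g2a i hi1 hin
      have hg' : (0 : ℝ) ≤ ((R (i + 1) : ℝ) - R i) + 2 * e := by exact_mod_cast hg
      linarith
    · obtain ⟨j, hj1, hji, rfl⟩ := hx
      exact famB_nonneg' h i j hi1 hin hj1 hji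
    · obtain ⟨j, hij, hjn, rfl⟩ := hx
      exact famC_nonneg' h i j hi1 hij hjn
  have h0le : 0 ≤ alpha e n R d i := le_sInf hnonneg
  refine ⟨h0le, ?_, ?_⟩
  · -- alpha = 0 → R (i+1) - R i = -2e
    intro h0
    by_contra hne
    have hhalf : ((1 / 2 : ℝ) : EReal) ≤ alpha e n R d i := by
      apply le_sInf
      intro x hx
      rcases hx with (hx | hx) | hx
      · rw [Set.mem_singleton_iff] at hx
        subst hx
        unfold halfTerm
        rw [EReal.coe_le_coe_iff]
        have hg := h.g2a i hi1 hin
        have hg1 : -(2 * e) + 1 ≤ R (i + 1) - R i := by omega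
        have hg1' : (-(2 * (e : ℝ)) + 1 : ℝ) ≤ (R (i + 1) : ℝ) - R i := by exact_mod_cast hg1
        linarith
      · obtain ⟨j, hj1, hji, rfl⟩ := hx
        have hjn : j + 1 ≤ n := by omega
        rcases d_cases' h j hj1 hjn with htop | ⟨c, hc, hd, _⟩
        · rw [htop, EReal.coe_add_top]; exact le_top
        · have hnn := famB_nonneg' h i j hi1 hin hj1 hji
          have hnz : ((R (i + 1) - R j : ℝ) : EReal) + d j ≠ 0 :=
            fun h0' => hne (famB_zero' h i j hi1 hin hj1 hji h0')
          rw [hd, ← EReal.coe_add] at hnn hnz ⊢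
          rw [EReal.coe_le_coe_iff]
          have h1 : (0 : ℝ) ≤ ((R (i + 1) : ℝ) - R j) + c :=
            by exact_mod_cast EReal.coe_nonneg.mp hnn
          have h2 : ((R (i + 1) : ℝ) - R j) + c ≠ 0 :=
            fun hq => hnz (by rw [show ((R (i+1) : ℝ) - R j) + c = 0 from hq]; simp)
          have h1' : 0 ≤ R (i + 1) - R j + c := by exact_mod_cast h1
          have h2' : R (i + 1) - R j + c ≠ 0 := fun hq => h2 (by exact_mod_cast hq)
          have h3 : 1 ≤ R (i + 1) - R j + c := by omega
          have h3' : (1 : ℝ) ≤ ((R (i + 1) : ℝ) - R j) + c := by exact_mod_cast h3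
          linarith
      · obtain ⟨j, hij, hjn, rfl⟩ := hx
        have hj1 : 1 ≤ j := le_trans hi1 hij
        rcases d_cases' h j hj1 hjn with htop | ⟨c, hc, hd, _⟩
        · rw [htop, EReal.coe_add_top]; exact le_top
        · have hnn := famC_nonneg' h i j hi1 hij hjn
          have hnz : ((R (j + 1) - R i : ℝ) : EReal) + d j ≠ 0 :=
            fun h0' => hne (famC_zero' h i j hi1 hij hjn h0')
          rw [hd, ← EReal.coe_add] at hnn hnz ⊢
          rw [EReal.coe_le_coe_iff]
          have h1 : (0 : ℝ) ≤ ((R (j + 1) : ℝ) - R i) + c :=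
            by exact_mod_cast EReal.coe_nonneg.mp hnn
          have h2 : ((R (j + 1) : ℝ) - R i) + c ≠ 0 :=
            fun hq => hnz (by rw [show ((R (j+1) : ℝ) - R i) + c = 0 from hq]; simp)
          have h1' : 0 ≤ R (j + 1) - R i + c := by exact_mod_cast h1
          have h2' : R (j + 1) - R i + c ≠ 0 := fun hq => h2 (by exact_mod_cast hq)
          have h3 : 1 ≤ R (j + 1) - R i + c := by omega
          have h3' : (1 : ℝ) ≤ ((R (j + 1) : ℝ) - R i) + c := by exact_mod_cast h3
          linarith
    rw [h0] at hhalf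
    have : (1 / 2 : ℝ) ≤ 0 := by
      rw [← EReal.coe_zero] at hhalf
      exact EReal.coe_le_coe_iff.mp hhalf
    linarith
  · -- R (i+1) - R i = -2e → alpha = 0
    intro heq
    have hmem : halfTerm e R i ∈ alphaSet e n R d i := by
      unfold alphaSet
      exact Set.mem_union_left _ (Set.mem_union_left _ rfl)
    have hle : alpha e n R d i ≤ halfTerm e R i := sInf_le hmem
    have hzero : halfTerm e R i = 0 := by
      unfold halfTerm
      have hr : ((R (i + 1) : ℝ) - R i) = -(2 * (e : ℝ)) := by exact_mod_cast heq
      rw [show ((R (i + 1) : ℝ) - R i) / 2 + (e : ℝ) = 0 by rw [hr]; ring]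
      exact EReal.coe_zero
    rw [hzero] at hle
    exact le_antisymm hle h0le
end

section
/- For every 1 ≤ i ≤ n−1, if R_{i+1} − R_i ≥ 2e then α_i = (R_{i+1} − R_i)/2 + e. -/
/-- if `R_{i+1} - R_i ≥ 2e` then `α_i = (R_{i+1} - R_i)/2 + e`. -/
theorem stmt11 (e : ℤ) (n : ℕ) (R : ℕ → ℤ) (d : ℕ → EReal)
    (h : GoodBONG e n R d) :
    ∀ i, 1 ≤ i → i + 1 ≤ n → 2 * e ≤ R (i + 1) - R i →
      alpha e n R d i = halfTerm e R i := by
  -- chain lemma from G1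
  have chain : ∀ k j : ℕ, 1 ≤ j → j + 2 * k ≤ n → R j ≤ R (j + 2 * k) := by
    intro k
    induction k with
    | zero => intro j _ _; simp
    | succ k ih =>
      intro j hj hjn
      have h1 : j + 2 * k + 2 ≤ n := by omega
      have := h.g1 (j + 2 * k) (by omega) h1
      have h2 := ih j hj (by omega)
      have heq : j + 2 * (k + 1) = j + 2 * k + 2 := by ring
      rw [heq]
      exact le_trans h2 this
  -- decode d j
  have dvals : ∀ j, 1 ≤ j → j + 1 ≤ n → d j = ⊤ ∨ ∃ r : ℝ, 0 ≤ r ∧ d j = (r : EReal) := by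
    intro j hj hjn
    rcases h.g3 j hj hjn with h0 | ⟨m, _, _, hm⟩ | h2e | htop
    · right; exact ⟨0, le_refl _, by rw [h0]; norm_cast⟩
    · right; exact ⟨m, Nat.cast_nonneg m, hm⟩
    · right
      refine ⟨((2 * e : ℤ) : ℝ), ?_, h2e⟩
      have he' : (1 : ℝ) ≤ (e : ℝ) := by exact_mod_cast h.he
      push_cast
      linarith
    · left; exact htop
  intro i hi hin h2e
  have hmem : halfTerm e R i ∈ alphaSet e n R d i := Or.inl (Or.inl rfl)
  refine le_antisymm (sInf_le hmem) (le_sInf ?_)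
  intro x hx
  rcases hx with (hx | ⟨j, hj1, hji, hx⟩) | ⟨j, hij, hjn, hx⟩
  · exact le_of_eq hx.symm
  · -- case j ≤ i
    subst hx
    have hjn : j + 1 ≤ n := by omega
    rcases dvals j hj1 hjn with htop | ⟨r, hr0, hrd⟩
    · rw [htop, EReal.add_top_of_ne_bot (EReal.coe_ne_bot _)]
      exact le_top
    rw [hrd, ← EReal.coe_add]
    rw [halfTerm, EReal.coe_le_coe_iff]
    rcases Nat.even_or_odd (i - j) with ⟨k, hk⟩ | ⟨k, hk⟩
    · -- same parity: R j ≤ R i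
      have hik : i = j + 2 * k := by omega
      have hRji : R j ≤ R i := by
        have := chain k j hj1 (by omega)
        rwa [← hik] at this
      have h2e' : (2 * e : ℝ) ≤ ((R (i + 1) : ℝ) - R i) := by exact_mod_cast h2e
      have hRji' : (R j : ℝ) ≤ R i := by exact_mod_cast hRji
      have he' : (1 : ℝ) ≤ e := by exact_mod_cast h.he
      push_cast
      linarith
    · -- opposite parity: R (j+1) ≤ R i, use g2b
      have hik : i = (j + 1) + 2 * k := by omega
      have hRji : R (j + 1) ≤ R i := by
        have := chain k (j + 1) (by omega) (by omega)
        rwa [← hik] at this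
      have hg2 := h.g2b j hj1 hjn
      rw [hrd, ← EReal.coe_add] at hg2
      have hg2' : (0 : ℝ) ≤ ((R (j + 1) - R j : ℤ) : ℝ) + r := by exact_mod_cast hg2
      have h2e' : (2 * e : ℝ) ≤ ((R (i + 1) : ℝ) - R i) := by exact_mod_cast h2e
      have hRji' : (R (j + 1) : ℝ) ≤ R i := by exact_mod_cast hRji
      have he' : (1 : ℝ) ≤ e := by exact_mod_cast h.he
      push_cast at hg2' ⊢
      linarith
  · -- case i ≤ j
    subst hx
    have hj1 : 1 ≤ j := by omega
    rcases dvals j hj1 hjn with htop | ⟨r, hr0, hrd⟩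
    · rw [htop, EReal.add_top_of_ne_bot (EReal.coe_ne_bot _)]
      exact le_top
    rw [hrd, ← EReal.coe_add]
    rw [halfTerm, EReal.coe_le_coe_iff]
    rcases Nat.even_or_odd (j - i) with ⟨k, hk⟩ | ⟨k, hk⟩
    · -- same parity: R (i+1) ≤ R (j+1)
      have hjk : j + 1 = (i + 1) + 2 * k := by omega
      have hRij : R (i + 1) ≤ R (j + 1) := by
        have := chain k (i + 1) (by omega) (by omega)
        rwa [← hjk] at this
      have h2e' : (2 * e : ℝ) ≤ ((R (i + 1) : ℝ) - R i) := by exact_mod_cast h2e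
      have hRij' : (R (i + 1) : ℝ) ≤ R (j + 1) := by exact_mod_cast hRij
      have he' : (1 : ℝ) ≤ e := by exact_mod_cast h.he
      push_cast
      linarith
    · -- opposite parity: R (i+1) ≤ R j, use g2b
      have hjk : j = (i + 1) + 2 * k := by omega
      have hRij : R (i + 1) ≤ R j := by
        have := chain k (i + 1) (by omega) (by omega)
        rwa [← hjk] at this
      have hg2 := h.g2b j hj1 hjn
      rw [hrd, ← EReal.coe_add] at hg2
      have hg2' : (0 : ℝ) ≤ ((R (j + 1) - R j : ℤ) : ℝ) + r := by exact_mod_cast hg2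
      have h2e' : (2 * e : ℝ) ≤ ((R (i + 1) : ℝ) - R i) := by exact_mod_cast h2e
      have hRij' : (R (i + 1) : ℝ) ≤ R j := by exact_mod_cast hRij
      have he' : (1 : ℝ) ≤ e := by exact_mod_cast h.he
      push_cast at hg2' ⊢
      linarith
end

section
/- For every 1 ≤ i ≤ n−1, if R_{i+1} − R_i ≤ 2e then α_i ≥ R_{i+1} − R_i, with equality if and only if R_{i+1} − R_i = 2e or R_{i+1} − R_i is odd. -/
lemma chainAux (e : ℤ) (n : ℕ) (R : ℕ → ℤ) (d : ℕ → EReal) (h : GoodBONG e n R d) :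
    ∀ k a, 1 ≤ a → a + 2 * k ≤ n → R a ≤ R (a + 2 * k) := by
  intro k
  induction k with
  | zero => intro a _ _; simp
  | succ k ih =>
    intro a ha hn2
    have h1 : R a ≤ R (a + 2) := h.g1 a ha (by omega)
    have h2 : R (a + 2) ≤ R (a + 2 + 2 * k) := ih (a + 2) (by omega) (by omega)
    have heq : a + 2 + 2 * k = a + 2 * (k + 1) := by ring
    rw [heq] at h2
    exact h1.trans h2

lemma chainG1 (e : ℤ) (n : ℕ) (R : ℕ → ℤ) (d : ℕ → EReal) (h : GoodBONG e n R d)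
    (a b : ℕ) (ha : 1 ≤ a) (hab : a ≤ b) (hbn : b ≤ n) (hpar : ∃ k, b = a + 2 * k) :
    R a ≤ R b := by
  obtain ⟨k, rfl⟩ := hpar
  exact chainAux e n R d h k a ha hbn

lemma drep (e : ℤ) (n : ℕ) (R : ℕ → ℤ) (d : ℕ → EReal) (h : GoodBONG e n R d)
    (j : ℕ) (hj1 : 1 ≤ j) (hjn : j + 1 ≤ n) :
    d j = ⊤ ∨ ∃ m : ℤ, 0 ≤ m ∧ 0 ≤ R (j + 1) - R j + m ∧
      (m = 0 ∨ Odd m ∨ m = 2 * e) ∧ d j = ((m : ℝ) : EReal) := by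
  have hg2 := h.g2b j hj1 hjn
  rcases h.g3 j hj1 hjn with h0 | ⟨m, hmo, _, hm⟩ | h2e | htop
  · right; refine ⟨0, le_refl _, ?_, Or.inl rfl, by rw [h0]; norm_num⟩
    rw [h0, add_zero] at hg2
    rw [EReal.coe_nonneg] at hg2
    have : (0:ℝ) ≤ (R (j+1) : ℝ) - (R j : ℝ) := hg2
    have h2 : (0:ℤ) ≤ R (j+1) - R j := by exact_mod_cast this
    omega
  · right; refine ⟨(m : ℤ), by positivity, ?_, Or.inr (Or.inl (by exact_mod_cast hmo)),
      by rw [hm]; norm_num⟩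
    rw [hm, ← EReal.coe_add, EReal.coe_nonneg] at hg2
    have h2 : (0:ℤ) ≤ R (j+1) - R j + (m:ℤ) := by exact_mod_cast hg2
    omega
  · right; refine ⟨2 * e, by have := h.he; omega, ?_, Or.inr (Or.inr rfl), by rw [h2e]⟩
    have := h.g2a j hj1 hjn
    omega
  · left; exact htop

lemma lemA0 (e : ℤ) (n : ℕ) (R : ℕ → ℤ) (d : ℕ → EReal) (h : GoodBONG e n R d)
    (i j : ℕ) (m : ℤ) (hj1 : 1 ≤ j) (hji : j ≤ i) (hin : i + 1 ≤ n)
    (hm0 : 0 ≤ m) (hg2 : 0 ≤ R (j + 1) - R j + m) :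
    0 ≤ R i - R j + m := by
  rcases Nat.even_or_odd (i - j) with ⟨k, hk⟩ | ⟨k, hk⟩
  · have hij : i = j + 2 * k := by omega
    have := chainG1 e n R d h j i hj1 hji (by omega) ⟨k, hij⟩
    omega
  · have hij : i = (j + 1) + 2 * k := by omega
    have := chainG1 e n R d h (j+1) i (by omega) (by omega) (by omega) ⟨k, hij⟩
    omega

lemma lemB0 (e : ℤ) (n : ℕ) (R : ℕ → ℤ) (d : ℕ → EReal) (h : GoodBONG e n R d)
    (i j : ℕ) (m : ℤ) (hi1 : 1 ≤ i) (hij : i ≤ j) (hjn : j + 1 ≤ n)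
    (hm0 : 0 ≤ m) (hg2 : 0 ≤ R (j + 1) - R j + m) :
    0 ≤ R (j + 1) - R (i + 1) + m := by
  rcases Nat.even_or_odd (j - i) with ⟨k, hk⟩ | ⟨k, hk⟩
  · have hj : j + 1 = (i + 1) + 2 * k := by omega
    have := chainG1 e n R d h (i+1) (j+1) (by omega) (by omega) hjn ⟨k, hj⟩
    omega
  · have hj : j = (i + 1) + 2 * k := by omega
    have := chainG1 e n R d h (i+1) j (by omega) (by omega) (by omega) ⟨k, hj⟩
    omega

lemma dzero_odd (e : ℤ) (n : ℕ) (R : ℕ → ℤ) (d : ℕ → EReal) (h : GoodBONG e n R d)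
    (j : ℕ) (hj1 : 1 ≤ j) (hjn : j + 1 ≤ n) (h0 : d j = 0) :
    Odd (R (j + 1) - R j) ∧ 0 < R (j + 1) - R j := by
  have hodd : Odd (R (j + 1) - R j) := by
    rcases Int.even_or_odd (R (j + 1) - R j) with hev | hodd
    · have := h.g4even j hj1 hjn hev
      rw [h0] at this
      exact absurd this (lt_irrefl _)
    · exact hodd
  exact ⟨hodd, (h.g4odd j hj1 hjn hodd).1⟩

lemma lemA (e : ℤ) (n : ℕ) (R : ℕ → ℤ) (d : ℕ → EReal) (h : GoodBONG e n R d)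
    (i j : ℕ) (m : ℤ) (hj1 : 1 ≤ j) (hji : j ≤ i) (hin : i + 1 ≤ n)
    (hm0 : 0 ≤ m) (hg2 : 0 ≤ R (j + 1) - R j + m)
    (hm : m = 0 ∨ Odd m ∨ m = 2 * e) (hd : d j = ((m : ℝ) : EReal))
    (heven : Even (R (i + 1) - R i)) (hlt : R (i + 1) - R i < 2 * e) :
    1 ≤ R i - R j + m := by
  by_contra hc
  push_neg at hc
  rcases Nat.even_or_odd (i - j) with ⟨k, hk⟩ | ⟨k, hk⟩
  · -- i = j + 2k
    have hji2 : i = j + 2 * k := by omega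
    have hRji : R j ≤ R i := chainG1 e n R d h j i hj1 hji (by omega) ⟨k, hji2⟩
    have hm00 : m = 0 := by omega
    have hRij : R i = R j := by omega
    have hd0 : d j = 0 := by rw [hd, hm00]; norm_num
    obtain ⟨hodd, hpos⟩ := dzero_odd e n R d h j hj1 (by omega) hd0
    rcases Nat.eq_zero_or_pos k with hk0 | hk1
    · -- j = i : contradiction with heven
      have : j = i := by omega
      rw [this] at hodd
      exact ((Int.not_odd_iff_even.mpr heven)) hodd
    · -- k ≥ 1
      have h1 : R j ≤ R (j + 2) := h.g1 j hj1 (by omega)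
      have h2 : R (j + 2) ≤ R i :=
        chainG1 e n R d h (j + 2) i (by omega) (by omega) (by omega) ⟨k - 1, by omega⟩
      have hjj2 : R (j + 2) = R j := by omega
      have hodd2 : Odd (R (j + 1 + 1) - R (j + 1)) := by
        have : R (j + 1 + 1) - R (j + 1) = -(R (j + 1) - R j) := by
          have : j + 1 + 1 = j + 2 := by omega
          rw [this]; omega
        rw [this]
        exact hodd.neg
      have := (h.g4odd (j + 1) (by omega) (by omega) hodd2).1
      have hee : j + 1 + 1 = j + 2 := by omega
      rw [hee] at this
      omega
  · -- i = j + 1 + 2k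
    have hji2 : i = (j + 1) + 2 * k := by omega
    have hRji : R (j + 1) ≤ R i :=
      chainG1 e n R d h (j + 1) i (by omega) (by omega) (by omega) ⟨k, hji2⟩
    have hz : R (j + 1) - R j + m = 0 := by omega
    have hRi : R i = R (j + 1) := by omega
    rcases hm with hm00 | hmodd | hm2e
    · -- m = 0 ⇒ R(j+1) = R j even diff ⇒ g4even contra
      have hev : Even (R (j + 1) - R j) := by
        have : R (j + 1) - R j = 0 := by omega
        rw [this]; exact Even.zero
      have := h.g4even j hj1 (by omega) hev
      rw [hd, hm00] at this
      norm_num at this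
    · -- m odd ⇒ diff odd ⇒ d j = 0 ⇒ m = 0 contra
      have hodd : Odd (R (j + 1) - R j) := by
        rw [Int.odd_iff] at hmodd ⊢
        omega
      have := (h.g4odd j hj1 (by omega) hodd).2
      rw [hd] at this
      have : (m : ℝ) = 0 := by exact_mod_cast EReal.coe_eq_zero.mp this
      have : m = 0 := by exact_mod_cast this
      rw [Int.odd_iff] at hmodd
      omega
    · -- m = 2e
      have hRj : R j ≤ R (i + 1) :=
        chainG1 e n R d h j (i + 1) hj1 (by omega) hin ⟨k + 1, by omega⟩
      omega

lemma lemB (e : ℤ) (n : ℕ) (R : ℕ → ℤ) (d : ℕ → EReal) (h : GoodBONG e n R d)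
    (i j : ℕ) (m : ℤ) (hi1 : 1 ≤ i) (hij : i ≤ j) (hjn : j + 1 ≤ n)
    (hm0 : 0 ≤ m) (hg2 : 0 ≤ R (j + 1) - R j + m)
    (hm : m = 0 ∨ Odd m ∨ m = 2 * e) (hd : d j = ((m : ℝ) : EReal))
    (heven : Even (R (i + 1) - R i)) (hlt : R (i + 1) - R i < 2 * e) :
    1 ≤ R (j + 1) - R (i + 1) + m := by
  by_contra hc
  push_neg at hc
  rcases Nat.even_or_odd (j - i) with ⟨k, hk⟩ | ⟨k, hk⟩
  · -- j = i + 2k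
    have hj2 : j + 1 = (i + 1) + 2 * k := by omega
    have hRj : R (i + 1) ≤ R (j + 1) :=
      chainG1 e n R d h (i + 1) (j + 1) (by omega) (by omega) hjn ⟨k, hj2⟩
    have hm00 : m = 0 := by omega
    have hReq : R (j + 1) = R (i + 1) := by omega
    have hd0 : d j = 0 := by rw [hd, hm00]; norm_num
    obtain ⟨hodd, hpos⟩ := dzero_odd e n R d h j (by omega) hjn hd0
    rcases Nat.eq_zero_or_pos k with hk0 | hk1
    · have : j = i := by omega
      rw [this] at hodd
      exact ((Int.not_odd_iff_even.mpr heven)) hodd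
    · -- k ≥ 1, a := i + 1 + 2*(k-1) = j - 1
      have ha1 : R (i + 1) ≤ R (i + 1 + 2 * (k - 1)) :=
        chainG1 e n R d h (i + 1) (i + 1 + 2 * (k - 1)) (by omega) (by omega) (by omega)
          ⟨k - 1, rfl⟩
      have ha2 : R (i + 1 + 2 * (k - 1)) ≤ R (i + 1 + 2 * (k - 1) + 2) :=
        h.g1 (i + 1 + 2 * (k - 1)) (by omega) (by omega)
      have haj : i + 1 + 2 * (k - 1) + 2 = j + 1 := by omega
      rw [haj] at ha2
      have haeq : R (i + 1 + 2 * (k - 1)) = R (j + 1) := by omega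
      have hodd2 : Odd (R (i + 1 + 2 * (k - 1) + 1) - R (i + 1 + 2 * (k - 1))) := by
        have h3 : i + 1 + 2 * (k - 1) + 1 = j := by omega
        rw [h3, haeq]
        have : R j - R (j + 1) = -(R (j + 1) - R j) := by ring
        rw [this]
        exact hodd.neg
      have := (h.g4odd (i + 1 + 2 * (k - 1)) (by omega) (by omega) hodd2).1
      have h3 : i + 1 + 2 * (k - 1) + 1 = j := by omega
      rw [h3, haeq] at this
      omega
  · -- j = i + 1 + 2k
    have hj2 : j = (i + 1) + 2 * k := by omega
    have hRj : R (i + 1) ≤ R j :=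
      chainG1 e n R d h (i + 1) j (by omega) (by omega) (by omega) ⟨k, hj2⟩
    have hz : R (j + 1) - R j + m = 0 := by omega
    have hReq : R j = R (i + 1) := by omega
    rcases hm with hm00 | hmodd | hm2e
    · have hev : Even (R (j + 1) - R j) := by
        have : R (j + 1) - R j = 0 := by omega
        rw [this]; exact Even.zero
      have := h.g4even j (by omega) hjn hev
      rw [hd, hm00] at this
      norm_num at this
    · have hodd : Odd (R (j + 1) - R j) := by
        rw [Int.odd_iff] at hmodd ⊢
        omega
      have := (h.g4odd j (by omega) hjn hodd).2
      rw [hd] at this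
      have : (m : ℝ) = 0 := by exact_mod_cast EReal.coe_eq_zero.mp this
      have : m = 0 := by exact_mod_cast this
      rw [Int.odd_iff] at hmodd
      omega
    · -- m = 2e
      have hRi : R i ≤ R (j + 1) :=
        chainG1 e n R d h i (j + 1) hi1 (by omega) hjn ⟨k + 1, by omega⟩
      omega

/-- if `R_{i+1} - R_i ≤ 2e` then `α_i ≥ R_{i+1} - R_i`, with equality
iff `R_{i+1} - R_i = 2e` or `R_{i+1} - R_i` is odd. -/
theorem stmt12 (e : ℤ) (n : ℕ) (R : ℕ → ℤ) (d : ℕ → EReal)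
    (h : GoodBONG e n R d) :
    ∀ i, 1 ≤ i → i + 1 ≤ n → R (i + 1) - R i ≤ 2 * e →
      ((R (i + 1) - R i : ℝ) : EReal) ≤ alpha e n R d i ∧
      (alpha e n R d i = ((R (i + 1) - R i : ℝ) : EReal) ↔
        R (i + 1) - R i = 2 * e ∨ Odd (R (i + 1) - R i)) := by
  intro i hi1 hin hle
  have hleR : (R (i + 1) : ℝ) - R i ≤ 2 * (e : ℝ) := by exact_mod_cast hle
  have lb : ∀ x ∈ alphaSet e n R d i, ((R (i + 1) - R i : ℝ) : EReal) ≤ x := by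
    rintro x ((hx | ⟨j, hj1, hji, rfl⟩) | ⟨j, hij, hjn, rfl⟩)
    · rw [Set.mem_singleton_iff] at hx
      subst hx
      unfold halfTerm
      rw [EReal.coe_le_coe_iff]
      linarith
    · rcases drep e n R d h j hj1 (by omega) with htop | ⟨m, hm0, hg2, hmc, hd⟩
      · rw [htop, EReal.coe_add_top]; exact le_top
      · rw [hd, ← EReal.coe_add, EReal.coe_le_coe_iff]
        have hZ : R (i + 1) - R i ≤ R (i + 1) - R j + m := by
          have := lemA0 e n R d h i j m hj1 hji hin hm0 hg2
          omega
        exact_mod_cast hZ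
    · rcases drep e n R d h j (by omega) hjn with htop | ⟨m, hm0, hg2, hmc, hd⟩
      · rw [htop, EReal.coe_add_top]; exact le_top
      · rw [hd, ← EReal.coe_add, EReal.coe_le_coe_iff]
        have hZ : R (i + 1) - R i ≤ R (j + 1) - R i + m := by
          have := lemB0 e n R d h i j m hi1 hij hjn hm0 hg2
          omega
        exact_mod_cast hZ
  refine ⟨le_sInf lb, ?_, ?_⟩
  · -- forward direction
    intro heq
    by_contra hcon
    push_neg at hcon
    obtain ⟨hne, hnodd⟩ := hcon
    have hlt : R (i + 1) - R i < 2 * e := lt_of_le_of_ne hle hne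
    have heven : Even (R (i + 1) - R i) := Int.not_odd_iff_even.mp hnodd
    set b : EReal :=
      min (halfTerm e R i) (((R (i + 1) - R i + 1 : ℤ) : ℝ) : EReal) with hb
    have hbb : ∀ x ∈ alphaSet e n R d i, b ≤ x := by
      rintro x ((hx | ⟨j, hj1, hji, rfl⟩) | ⟨j, hij, hjn, rfl⟩)
      · rw [Set.mem_singleton_iff] at hx
        subst hx
        exact min_le_left _ _
      · rcases drep e n R d h j hj1 (by omega) with htop | ⟨m, hm0, hg2, hmc, hd⟩
        · rw [htop, EReal.coe_add_top]; exact le_top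
        · refine (min_le_right _ _).trans ?_
          rw [hd, ← EReal.coe_add, EReal.coe_le_coe_iff]
          have hZ : R (i + 1) - R i + 1 ≤ R (i + 1) - R j + m := by
            have := lemA e n R d h i j m hj1 hji hin hm0 hg2 hmc hd heven hlt
            omega
          exact_mod_cast hZ
      · rcases drep e n R d h j (by omega) hjn with htop | ⟨m, hm0, hg2, hmc, hd⟩
        · rw [htop, EReal.coe_add_top]; exact le_top
        · refine (min_le_right _ _).trans ?_
          rw [hd, ← EReal.coe_add, EReal.coe_le_coe_iff]
          have hZ : R (i + 1) - R i + 1 ≤ R (j + 1) - R i + m := by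
            have := lemB e n R d h i j m hi1 hij hjn hm0 hg2 hmc hd heven hlt
            omega
          exact_mod_cast hZ
    have h1 : b ≤ alpha e n R d i := le_sInf hbb
    rw [heq] at h1
    have h2 : ((R (i + 1) - R i : ℝ) : EReal) < b := by
      apply lt_min
      · unfold halfTerm
        rw [EReal.coe_lt_coe_iff]
        have : (R (i + 1) : ℝ) - R i < 2 * (e : ℝ) := by exact_mod_cast hlt
        linarith
      · rw [EReal.coe_lt_coe_iff]
        have hZ : R (i + 1) - R i < R (i + 1) - R i + 1 := by omega
        exact_mod_cast hZ
    exact absurd h1 (not_le.mpr h2)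
  · -- backward direction
    rintro (h2e | hodd)
    · refine le_antisymm ?_ (le_sInf lb)
      have hmem : halfTerm e R i ∈ alphaSet e n R d i :=
        Set.mem_union_left _ (Set.mem_union_left _ rfl)
      have heq2 : halfTerm e R i = ((R (i + 1) - R i : ℝ) : EReal) := by
        unfold halfTerm
        congr 1
        have : (R (i + 1) : ℝ) - R i = 2 * (e : ℝ) := by exact_mod_cast h2e
        linarith
      exact heq2 ▸ sInf_le hmem
    · obtain ⟨_, hd0⟩ := h.g4odd i hi1 hin hodd
      have hmem : ((R (i + 1) - R i : ℝ) : EReal) + d i ∈ alphaSet e n R d i :=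
        Set.mem_union_right _ ⟨i, le_refl i, hin, rfl⟩
      refine le_antisymm ?_ (le_sInf lb)
      have h3 := sInf_le hmem
      rw [hd0, add_zero] at h3
      exact h3
end

section
/- For every 1 ≤ i ≤ n−1, either α_i = (R_{i+1} − R_i)/2 + e, or α_i is an odd integer. -/
/-- Monotonicity along even chains (iterated (G1)). -/
lemma chain2 {e : ℤ} {n : ℕ} {R : ℕ → ℤ} {d : ℕ → EReal} (h : GoodBONG e n R d) :
    ∀ t a : ℕ, 1 ≤ a → a + 2 * t ≤ n → R a ≤ R (a + 2 * t) := by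
  intro t
  induction t with
  | zero => intro a _ _; simp
  | succ t ih =>
    intro a ha han
    have h1 : R a ≤ R (a + 2) := h.g1 a ha (by omega)
    have h2 : R (a + 2) ≤ R (a + 2 + 2 * t) := ih (a + 2) (by omega) (by omega)
    have he : a + 2 + 2 * t = a + 2 * (t + 1) := by ring
    rw [he] at h2
    exact le_trans h1 h2

/-- Lower bound for later entries: `R j - c ≤ R k` for `j ≤ k`, if `0 ≤ c` and
`0 ≤ R (j+1) - R j + c`. -/
lemma Rlow {e : ℤ} {n : ℕ} {R : ℕ → ℤ} {d : ℕ → EReal} (h : GoodBONG e n R d)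
    (j k : ℕ) (hj : 1 ≤ j) (hjk : j ≤ k) (hk : k ≤ n) (c : ℤ) (hc : 0 ≤ c)
    (hg2 : 0 ≤ R (j + 1) - R j + c) : R j - c ≤ R k := by
  rcases Nat.even_or_odd (k - j) with ⟨t, ht⟩ | ⟨t, ht⟩
  · have hk' : k = j + 2 * t := by omega
    have := chain2 h t j hj (by omega)
    rw [← hk'] at this
    linarith
  · have hk' : k = (j + 1) + 2 * t := by omega
    have := chain2 h t (j + 1) (by omega) (by omega)
    rw [← hk'] at this
    linarith

/-- Upper bound for earlier entries: `R k ≤ R (j+1) + c` for `k ≤ j+1`. -/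
lemma Rhigh {e : ℤ} {n : ℕ} {R : ℕ → ℤ} {d : ℕ → EReal} (h : GoodBONG e n R d)
    (j k : ℕ) (hk1 : 1 ≤ k) (hkj : k ≤ j + 1) (hjn : j + 1 ≤ n) (c : ℤ) (hc : 0 ≤ c)
    (hg2 : 0 ≤ R (j + 1) - R j + c) : R k ≤ R (j + 1) + c := by
  rcases Nat.even_or_odd (j + 1 - k) with ⟨t, ht⟩ | ⟨t, ht⟩
  · have hk' : j + 1 = k + 2 * t := by omega
    have := chain2 h t k hk1 (by omega)
    rw [← hk'] at this
    linarith
  · have hk' : j = k + 2 * t := by omega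
    have := chain2 h t k hk1 (by omega)
    rw [← hk'] at this
    linarith

/-- Pair sum monotonicity: `R j + R (j+1) ≤ R i + R (i+1)` for `j ≤ i`. -/
lemma pairsum {e : ℤ} {n : ℕ} {R : ℕ → ℤ} {d : ℕ → EReal} (h : GoodBONG e n R d)
    (j i : ℕ) (hj : 1 ≤ j) (hji : j ≤ i) (hin : i + 1 ≤ n) :
    R j + R (j + 1) ≤ R i + R (i + 1) := by
  rcases Nat.even_or_odd (i - j) with ⟨t, ht⟩ | ⟨t, ht⟩
  · have h1 : i = j + 2 * t := by omega
    have c1 := chain2 h t j hj (by omega)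
    have c2 := chain2 h t (j + 1) (by omega) (by omega)
    rw [← h1] at c1
    have h2 : j + 1 + 2 * t = i + 1 := by omega
    rw [h2] at c2
    linarith
  · have h1 : i + 1 = j + 2 * (t + 1) := by omega
    have c1 := chain2 h (t + 1) j hj (by omega)
    rw [← h1] at c1
    have h2 : i = (j + 1) + 2 * t := by omega
    have c2 := chain2 h t (j + 1) (by omega) (by omega)
    rw [← h2] at c2
    linarith

/-- Core parity lemma, left-hand family: if `α = R_{i+1} - R_j + d_j` is the minimum
(so all terms of the left family are `≥` it) and `d_j = c` is a finite value which is
`0` or odd, then `N = R_{i+1} - R_j + c` is odd. -/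
lemma left_parity {e : ℤ} {n : ℕ} {R : ℕ → ℤ} {d : ℕ → EReal} (h : GoodBONG e n R d)
    (i j : ℕ) (hj1 : 1 ≤ j) (hji : j ≤ i) (hin : i + 1 ≤ n)
    (c : ℤ) (hc0 : 0 ≤ c)
    (hbase : Odd (c + (R (j + 1) - R j)))
    (hg2c : 0 ≤ R (j + 1) - R j + c)
    (N : ℤ) (hN : N = R (i + 1) - R j + c)
    (hmin : ∀ k, j ≤ k → k ≤ i →
      ((N : ℝ) : EReal) ≤ ((R (i + 1) - R k : ℝ) : EReal) + d k) :
    Odd N := by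
  have claim : ∀ t, j + t ≤ i → Odd (N - R (i + 1) + R (j + t + 1)) := by
    intro t
    induction t with
    | zero =>
      intro _
      have heq : N - R (i + 1) + R (j + 0 + 1) = c + (R (j + 1) - R j) := by
        simp only [Nat.add_zero]
        rw [hN]; ring
      rw [heq]; exact hbase
    | succ t ih =>
      intro hti
      set k := j + t + 1 with hk
      have hki : k ≤ i := by omega
      have hodd_u : Odd (N - R (i + 1) + R k) := ih (by omega)
      have hlow : R j - c ≤ R k := Rlow h j k hj1 (by omega) (by omega) c hc0 hg2c
      have hu0 : 0 ≤ N - R (i + 1) + R k := by rw [hN]; linarith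
      have hu1 : 1 ≤ N - R (i + 1) + R k := by
        obtain ⟨s, hs⟩ := hodd_u
        omega
      have hdk : d k ≠ 0 := by
        intro h0
        have hm := hmin k (by omega) hki
        rw [h0, add_zero] at hm
        have hm' : (N : ℝ) ≤ ((R (i + 1) - R k : ℤ) : ℝ) := by
          have : ((N : ℝ) : EReal) ≤ (((R (i + 1) - R k : ℤ) : ℝ) : EReal) := by
            convert hm using 2
            push_cast
            ring
          exact_mod_cast this
        have : (N : ℤ) ≤ R (i + 1) - R k := by exact_mod_cast hm'
        omega
      have hdiffeven : Even (R (k + 1) - R k) := by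
        rcases Int.even_or_odd (R (k + 1) - R k) with he' | ho'
        · exact he'
        · exact absurd (h.g4odd k (by omega) (by omega) ho').2 hdk
      have heq : N - R (i + 1) + R (j + (t + 1) + 1)
          = (N - R (i + 1) + R k) + (R (k + 1) - R k) := by
        have : j + (t + 1) + 1 = k + 1 := by omega
        rw [this]; ring
      rw [heq]
      exact hodd_u.add_even hdiffeven
  have hfin := claim (i - j) (by omega)
  have hidx : j + (i - j) + 1 = i + 1 := by omega
  rw [hidx] at hfin
  have : N - R (i + 1) + R (i + 1) = N := by ring
  rwa [this] at hfin

/-- Core parity lemma, right-hand family. -/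
lemma right_parity {e : ℤ} {n : ℕ} {R : ℕ → ℤ} {d : ℕ → EReal} (h : GoodBONG e n R d)
    (i j : ℕ) (hi1 : 1 ≤ i) (hij : i ≤ j) (hjn : j + 1 ≤ n)
    (c : ℤ) (hc0 : 0 ≤ c)
    (hbase : Odd (c + (R (j + 1) - R j)))
    (hg2c : 0 ≤ R (j + 1) - R j + c)
    (N : ℤ) (hN : N = R (j + 1) - R i + c)
    (hmin : ∀ m, i ≤ m → m ≤ j →
      ((N : ℝ) : EReal) ≤ ((R (m + 1) - R i : ℝ) : EReal) + d m) :
    Odd N := by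
  have claim : ∀ t, ∀ m, i ≤ m → m + t = j → Odd (N - R m + R i) := by
    intro t
    induction t with
    | zero =>
      intro m him hmt
      have hmj : m = j := by omega
      subst hmj
      have heq : N - R m + R i = c + (R (m + 1) - R m) := by rw [hN]; ring
      rw [heq]; exact hbase
    | succ t ih =>
      intro m him hmt
      have hmj : m < j := by omega
      have hv : Odd (N - R (m + 1) + R i) := ih (m + 1) (by omega) (by omega)
      have hhigh : R (m + 1) ≤ R (j + 1) + c :=
        Rhigh h j (m + 1) (by omega) (by omega) hjn c hc0 hg2c
      have hv0 : 0 ≤ N - R (m + 1) + R i := by rw [hN]; linarith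
      have hv1 : 1 ≤ N - R (m + 1) + R i := by
        obtain ⟨s, hs⟩ := hv
        omega
      have hdm : d m ≠ 0 := by
        intro h0
        have hm := hmin m him (by omega)
        rw [h0, add_zero] at hm
        have hm' : (N : ℝ) ≤ ((R (m + 1) - R i : ℤ) : ℝ) := by
          have : ((N : ℝ) : EReal) ≤ (((R (m + 1) - R i : ℤ) : ℝ) : EReal) := by
            convert hm using 2
            push_cast
            ring
          exact_mod_cast this
        have : (N : ℤ) ≤ R (m + 1) - R i := by exact_mod_cast hm'
        omega
      have hdiffeven : Even (R (m + 1) - R m) := by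
        rcases Int.even_or_odd (R (m + 1) - R m) with he' | ho'
        · exact he'
        · exact absurd (h.g4odd m (by omega) (by omega) ho').2 hdm
      have heq : N - R m + R i = (N - R (m + 1) + R i) + (R (m + 1) - R m) := by ring
      rw [heq]
      exact hv.add_even hdiffeven
  have hfin := claim (j - i) i (le_refl i) (by omega)
  have : N - R i + R i = N := by ring
  rwa [this] at hfin

/-- The set `alphaSet` is finite. -/
lemma alphaSet_finite (e : ℤ) (n : ℕ) (R : ℕ → ℤ) (d : ℕ → EReal) (i : ℕ) :
    (alphaSet e n R d i).Finite := by
  have h1 : {x : EReal | ∃ j, 1 ≤ j ∧ j ≤ i ∧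
      x = ((R (i + 1) - R j : ℝ) : EReal) + d j}
      ⊆ (fun j => ((R (i + 1) - R j : ℝ) : EReal) + d j) '' (Set.Icc 1 i) := by
    rintro x ⟨j, hj1, hji, rfl⟩
    exact ⟨j, ⟨hj1, hji⟩, rfl⟩
  have h2 : {x : EReal | ∃ j, i ≤ j ∧ j + 1 ≤ n ∧
      x = ((R (j + 1) - R i : ℝ) : EReal) + d j}
      ⊆ (fun j => ((R (j + 1) - R i : ℝ) : EReal) + d j) '' (Set.Icc i n) := by
    rintro x ⟨j, hji, hjn, rfl⟩
    exact ⟨j, ⟨hji, by omega⟩, rfl⟩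
  exact (((Set.finite_singleton _).union
    (((Set.finite_Icc 1 i).image _).subset h1)).union
    (((Set.finite_Icc i n).image _).subset h2))

/-- either `α_i = (R_{i+1} - R_i)/2 + e`, or `α_i` is an odd integer. -/
theorem stmt13 (e : ℤ) (n : ℕ) (R : ℕ → ℤ) (d : ℕ → EReal)
    (h : GoodBONG e n R d) :
    ∀ i, 1 ≤ i → i + 1 ≤ n →
      alpha e n R d i = halfTerm e R i ∨
      ∃ m : ℤ, Odd m ∧ alpha e n R d i = ((m : ℝ) : EReal) := by
  intro i hi1 hin
  have hHmem : halfTerm e R i ∈ alphaSet e n R d i :=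
    Or.inl (Or.inl rfl)
  have hαle : alpha e n R d i ≤ halfTerm e R i := sInf_le hHmem
  have hmem : alpha e n R d i ∈ alphaSet e n R d i :=
    Set.Nonempty.csInf_mem ⟨_, hHmem⟩ (alphaSet_finite e n R d i)
  -- helper to process a single term of either family
  rcases hmem with (hα | ⟨j, hj1, hji, hα⟩) | ⟨j, hji, hjn, hα⟩
  · left; exact hα
  · -- left family
    have hjn : j + 1 ≤ n := by omega
    rcases h.g3 j hj1 hjn with h0 | ⟨m, hmodd, _, hm⟩ | h2e | htop
    · -- d j = 0
      have hdiffodd : Odd (R (j + 1) - R j) := by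
        rcases Int.even_or_odd (R (j + 1) - R j) with he' | ho'
        · exact absurd (h.g4even j hj1 hjn he') (by rw [h0]; exact lt_irrefl 0)
        · exact ho'
      set N := R (i + 1) - R j + 0 with hNdef
      have hαN : alpha e n R d i = ((N : ℝ) : EReal) := by
        rw [hα, h0, add_zero]
        congr 1
        push_cast [hNdef]
        ring
      have hNodd : Odd N := by
        apply left_parity h i j hj1 hji hin 0 le_rfl
          (by simpa using hdiffodd) (by
            have := (h.g4odd j hj1 hjn hdiffodd).1
            omega) N hNdef
        intro k hjk hki
        rw [← hαN]
        exact sInf_le (Or.inl (Or.inr ⟨k, by omega, hki, rfl⟩))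
      exact Or.inr ⟨N, hNodd, hαN⟩
    · -- d j odd
      set c : ℤ := (m : ℤ) with hcdef
      have hcodd : Odd c := by
        rw [hcdef, Int.odd_coe_nat]
        exact hmodd
      have hc0 : 0 ≤ c := Int.natCast_nonneg m
      have hdiffeven : Even (R (j + 1) - R j) := by
        rcases Int.even_or_odd (R (j + 1) - R j) with he' | ho'
        · exact he'
        · exfalso
          have := (h.g4odd j hj1 hjn ho').2
          rw [hm] at this
          have hm0 : (m : ℝ) = 0 := by exact_mod_cast this
          have : m = 0 := by exact_mod_cast hm0
          subst this
          simp [Nat.odd_iff] at hmodd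
      have hg2c : 0 ≤ R (j + 1) - R j + c := by
        have h2 := h.g2b j hj1 hjn
        rw [hm, ← EReal.coe_add, ← EReal.coe_zero, EReal.coe_le_coe_iff] at h2
        have h3 : (0 : ℝ) ≤ ((R (j + 1) - R j + c : ℤ) : ℝ) := by
          push_cast [hcdef]
          linarith
        exact_mod_cast h3
      set N := R (i + 1) - R j + c with hNdef
      have hαN : alpha e n R d i = ((N : ℝ) : EReal) := by
        rw [hα, hm, ← EReal.coe_add]
        congr 1
        push_cast [hNdef, hcdef]
        ring
      have hNodd : Odd N :=
        left_parity h i j hj1 hji hin c hc0 (hcodd.add_even hdiffeven) hg2c N hNdef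
          (fun k hjk hki => by
            rw [← hαN]
            exact sInf_le (Or.inl (Or.inr ⟨k, by omega, hki, rfl⟩)))
      exact Or.inr ⟨N, hNodd, hαN⟩
    · -- d j = 2e : α = halfTerm
      left
      have hps : R j + R (j + 1) ≤ R i + R (i + 1) := pairsum h j i hj1 hji hin
      have hg2a := h.g2a j hj1 hjn
      have hint : 0 ≤ R (i + 1) + R i - 2 * R j + 2 * e := by linarith
      have hge : halfTerm e R i ≤ alpha e n R d i := by
        rw [hα, h2e, ← EReal.coe_add]
        unfold halfTerm
        rw [EReal.coe_le_coe_iff]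
        have hr : ((0 : ℤ) : ℝ) ≤ ((R (i + 1) + R i - 2 * R j + 2 * e : ℤ) : ℝ) :=
          Int.cast_le.mpr hint
        push_cast at hr ⊢
        linarith
      exact le_antisymm hαle hge
    · -- d j = ⊤ : contradiction with α ≤ halfTerm
      exfalso
      rw [htop, EReal.coe_add_top] at hα
      rw [hα] at hαle
      exact absurd (top_le_iff.mp hαle) (by unfold halfTerm; exact EReal.coe_ne_top _)
  · -- right family
    have hj1 : 1 ≤ j := by omega
    rcases h.g3 j hj1 hjn with h0 | ⟨m, hmodd, _, hm⟩ | h2e | htop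
    · -- d j = 0
      have hdiffodd : Odd (R (j + 1) - R j) := by
        rcases Int.even_or_odd (R (j + 1) - R j) with he' | ho'
        · exact absurd (h.g4even j hj1 hjn he') (by rw [h0]; exact lt_irrefl 0)
        · exact ho'
      set N := R (j + 1) - R i + 0 with hNdef
      have hαN : alpha e n R d i = ((N : ℝ) : EReal) := by
        rw [hα, h0, add_zero]
        congr 1
        push_cast [hNdef]
        ring
      have hNodd : Odd N := by
        apply right_parity h i j hi1 hji hjn 0 le_rfl
          (by simpa using hdiffodd) (by
            have := (h.g4odd j hj1 hjn hdiffodd).1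
            omega) N hNdef
        intro k hik hkj
        rw [← hαN]
        exact sInf_le (Or.inr ⟨k, hik, by omega, rfl⟩)
      exact Or.inr ⟨N, hNodd, hαN⟩
    · -- d j odd
      set c : ℤ := (m : ℤ) with hcdef
      have hcodd : Odd c := by
        rw [hcdef, Int.odd_coe_nat]
        exact hmodd
      have hc0 : 0 ≤ c := Int.natCast_nonneg m
      have hdiffeven : Even (R (j + 1) - R j) := by
        rcases Int.even_or_odd (R (j + 1) - R j) with he' | ho'
        · exact he'
        · exfalso
          have := (h.g4odd j hj1 hjn ho').2
          rw [hm] at this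
          have hm0 : (m : ℝ) = 0 := by exact_mod_cast this
          have : m = 0 := by exact_mod_cast hm0
          subst this
          simp [Nat.odd_iff] at hmodd
      have hg2c : 0 ≤ R (j + 1) - R j + c := by
        have h2 := h.g2b j hj1 hjn
        rw [hm, ← EReal.coe_add, ← EReal.coe_zero, EReal.coe_le_coe_iff] at h2
        have h3 : (0 : ℝ) ≤ ((R (j + 1) - R j + c : ℤ) : ℝ) := by
          push_cast [hcdef]
          linarith
        exact_mod_cast h3
      set N := R (j + 1) - R i + c with hNdef
      have hαN : alpha e n R d i = ((N : ℝ) : EReal) := by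
        rw [hα, hm, ← EReal.coe_add]
        congr 1
        push_cast [hNdef, hcdef]
        ring
      have hNodd : Odd N :=
        right_parity h i j hi1 hji hjn c hc0 (hcodd.add_even hdiffeven) hg2c N hNdef
          (fun k hik hkj => by
            rw [← hαN]
            exact sInf_le (Or.inr ⟨k, hik, by omega, rfl⟩))
      exact Or.inr ⟨N, hNodd, hαN⟩
    · -- d j = 2e : α = halfTerm
      left
      have hps : R i + R (i + 1) ≤ R j + R (j + 1) := pairsum h i j hi1 hji hjn
      have hg2a := h.g2a j hj1 hjn
      have hint : 0 ≤ 2 * R (j + 1) - R (i + 1) - R i + 2 * e := by linarith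
      have hge : halfTerm e R i ≤ alpha e n R d i := by
        rw [hα, h2e, ← EReal.coe_add]
        unfold halfTerm
        rw [EReal.coe_le_coe_iff]
        have hr : ((0 : ℤ) : ℝ) ≤ ((2 * R (j + 1) - R (i + 1) - R i + 2 * e : ℤ) : ℝ) :=
          Int.cast_le.mpr hint
        push_cast at hr ⊢
        linarith
      exact le_antisymm hαle hge
    · -- d j = ⊤
      exfalso
      rw [htop, EReal.coe_add_top] at hα
      rw [hα] at hαle
      exact absurd (top_le_iff.mp hαle) (by unfold halfTerm; exact EReal.coe_ne_top _)
end
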